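/- arXiv:1112.4584 — 6 statements merged into one kernel-verified Lean document; each statement's English description precedes it below -/
import Mathlib

section
/- Let Γ be a compact group, A and B unital C*-algebras, and κ : A → B a unital *-homomorphism. Suppose 0 ≤ r < 1/17 and ρ₀ : Γ → U(A) is a continuous map such that for all g, h ∈ Γ, ‖ρ₀(gh) - ρ₀(g)ρ₀(h)‖ ≤ r and κ∘ρ₀ is a group homomorphism. Then there exists a continuous group homomorphism ρ : Γ → U(A) with sup_{g∈Γ} ‖ρ(g) - ρ₀(g)‖ ≤ 2r/(1 - 17r) and κ∘ρ = κ∘ρ₀. -/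
/-!
Averaging a near-representation against Haar measure, `f(g) = ∫ ρ(g h) ρ(h)⋆ dh`, squares its
multiplicativity defect: if `ρ` is `ε`-multiplicative and `ε²`-unitary, then `f` is
`O(ε²)`-multiplicative and lies within about `ε` of `ρ`. One Newton–Schulz step
`a ↦ a (3 - a⋆a) / 2` then makes `f` unitary up to `O(ε⁴)`. Iterating, the defects of
`ρₙ₊₁ := step ρₙ` decrease geometrically with ratio `17 r`, so `ρₙ` converges uniformly to a
continuous unitary representation at distance at most `∑ 2 r (17 r)ⁿ = 2 r / (1 - 17 r)` from `ρ₀`.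
Both operations commute with `*`-homomorphisms and fix unitary representations, so
`κ ∘ ρₙ = κ ∘ ρ₀` for every `n`.
-/

open MeasureTheory Filter Topology

theorem exists_continuous_tendsto_of_dist_le_geometric {X E : Type*} [TopologicalSpace X]
    [PseudoMetricSpace E] [CompleteSpace E] {u : ℕ → X → E} {C q : ℝ} (hq0 : 0 ≤ q) (hq1 : q < 1)
    (hu : ∀ n, Continuous (u n)) (hdist : ∀ n x, dist (u n x) (u (n + 1) x) ≤ C * q ^ n) :
    ∃ F : X → E, Continuous F ∧ (∀ x, Tendsto (u · x) atTop (𝓝 (F x))) ∧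
      ∀ x, dist (u 0 x) (F x) ≤ C / (1 - q) := by
  choose F hF using fun x ↦
    cauchySeq_tendsto_of_complete (cauchySeq_of_le_geometric q C hq1 (hdist · x))
  have hbound : Tendsto (fun n ↦ C * q ^ n / (1 - q)) atTop (𝓝 0) := by
    simpa using ((tendsto_pow_atTop_nhds_zero_of_lt_one hq0 hq1).const_mul C).div_const (1 - q)
  have hunif : TendstoUniformly u F atTop := by
    refine Metric.tendstoUniformly_iff.2 fun δ hδ ↦ ?_
    filter_upwards [hbound.eventually_lt_const hδ] with n hn x
    rw [dist_comm]
    exact (dist_le_of_le_geometric_of_tendsto q C hq1 (hdist · x) (hF x) n).trans_lt hn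
  exact ⟨F, hunif.continuous (.of_forall hu), hF,
    fun x ↦ dist_le_of_le_geometric_of_tendsto₀ q C hq1 (hdist · x) (hF x)⟩

lemma eq_of_tendsto_of_norm_sub_le {E : Type*} [NormedAddCommGroup E]
    {x y : ℕ → E} {a b : E} {δ : ℕ → ℝ} (hx : Tendsto x atTop (𝓝 a)) (hy : Tendsto y atTop (𝓝 b))
    (hδ : Tendsto δ atTop (𝓝 0)) (hxy : ∀ n, ‖x n - y n‖ ≤ δ n) : a = b :=
  sub_eq_zero.1 (tendsto_nhds_unique (hx.sub hy) (squeeze_zero_norm hxy hδ))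

lemma norm_integral_le_of_forall_norm_le {X E : Type*} [MeasurableSpace X] (μ : Measure X)
    [IsProbabilityMeasure μ] [NormedAddCommGroup E] [NormedSpace ℝ E] {φ : X → E} {C : ℝ}
    (h : ∀ x, ‖φ x‖ ≤ C) : ‖∫ x, φ x ∂μ‖ ≤ C := by
  simpa using norm_integral_le_of_norm_le_const (μ := μ) (.of_forall h)

section CompactIntegral

variable {X : Type*} [TopologicalSpace X] [CompactSpace X] [MeasurableSpace X]
  [OpensMeasurableSpace X] (μ : Measure X) {E : Type*} [NormedAddCommGroup E]

lemma Continuous.integrable_of_compactSpace [IsFiniteMeasure μ] {φ : X → E} (hφ : Continuous φ) :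
    Integrable φ μ :=
  hφ.integrable_of_hasCompactSupport (.of_compactSpace _)

variable [NormedSpace ℝ E] [IsProbabilityMeasure μ]

lemma continuous_integral_continuousMap : Continuous fun φ : C(X, E) ↦ ∫ x, φ x ∂μ := by
  refine (LipschitzWith.of_dist_le_mul (K := 1) fun φ ψ ↦ ?_).continuous
  rw [dist_eq_norm, dist_eq_norm, NNReal.coe_one, one_mul, ← integral_sub
    (φ.continuous.integrable_of_compactSpace μ) (ψ.continuous.integrable_of_compactSpace μ)]
  exact norm_integral_le_of_forall_norm_le μ fun x ↦ (φ - ψ).norm_coe_le_norm x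

end CompactIntegral

lemma integral_star {X : Type*} [MeasurableSpace X] (μ : Measure X) {A : Type*} [CStarAlgebra A]
    (φ : X → A) : ∫ x, star (φ x) ∂μ = star (∫ x, φ x ∂μ) :=
  (starL' ℝ : A ≃L[ℝ] A).integral_comp_comm φ

lemma continuous_starAlgHom {A B : Type*} [CStarAlgebra A] [CStarAlgebra B] (κ : A →⋆ₐ[ℂ] B) :
    Continuous κ := by
  open scoped CStarAlgebra in exact map_continuous κ

lemma norm_pow_three_sub_nsmul_sq_le {A : Type*} [NormedRing A] (d : A) :
    ‖d ^ 3 - 3 • d ^ 2‖ ≤ ‖d‖ ^ 2 * (‖d‖ + 3) := by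
  calc ‖d ^ 3 - 3 • d ^ 2‖ ≤ ‖d ^ 3‖ + 3 * ‖d ^ 2‖ :=
        (norm_sub_le _ _).trans (by gcongr; exact norm_nsmul_le ..)
    _ ≤ ‖d‖ ^ 3 + 3 * ‖d‖ ^ 2 := by gcongr <;> exact norm_pow_le' _ (by norm_num)
    _ = ‖d‖ ^ 2 * (‖d‖ + 3) := by ring

lemma norm_inv_four_smul_sub_one_le {A : Type*} [NormedRing A] [NormedAlgebra ℂ A] (c : A) :
    ‖(4⁻¹ : ℂ) • ((3 - c) * c * (3 - c)) - 1‖ ≤ ‖c - 1‖ ^ 2 * (‖c - 1‖ + 3) / 4 := by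
  -- `(3 - c) c (3 - c) - 4 = (c - 1)² (c - 4)` vanishes to second order at `c = 1`.
  have key : (4⁻¹ : ℂ) • ((3 - c) * c * (3 - c)) - 1
      = (4⁻¹ : ℂ) • ((c - 1) ^ 3 - 3 • (c - 1) ^ 2) := by
    have : (3 - c) * c * (3 - c) = (c - 1) ^ 3 - 3 • (c - 1) ^ 2 + (4 : ℂ) • 1 := by
      rw [ofNat_smul_eq_nsmul (R := ℂ)]
      noncomm_ring
    rw [this, smul_add, smul_smul]
    norm_num
  rw [key, norm_smul, norm_inv, Complex.norm_ofNat, inv_mul_eq_div]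
  gcongr
  exact norm_pow_three_sub_nsmul_sq_le _

section Unitarize

variable {A : Type*} [CStarAlgebra A]

noncomputable def unitarize (a : A) : A := (2⁻¹ : ℂ) • (a * (3 - star a * a))

lemma star_unitarize_mul_self (a : A) :
    star (unitarize a) * unitarize a =
      (4⁻¹ : ℂ) • ((3 - star a * a) * (star a * a) * (3 - star a * a)) := by
  simp only [unitarize, star_smul, star_mul, star_sub, star_star, star_ofNat, smul_mul_smul]
  norm_num
  noncomm_ring

lemma unitarize_mul_star_self (a : A) :
    unitarize a * star (unitarize a) =
      (4⁻¹ : ℂ) • ((3 - a * star a) * (a * star a) * (3 - a * star a)) := by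
  simp only [unitarize, star_smul, star_mul, star_sub, star_star, star_ofNat, smul_mul_smul]
  norm_num
  noncomm_ring

lemma norm_star_unitarize_mul_self_sub_one_le (a : A) :
    ‖star (unitarize a) * unitarize a - 1‖ ≤ ‖star a * a - 1‖ ^ 2 * (‖star a * a - 1‖ + 3) / 4 := by
  rw [star_unitarize_mul_self]
  exact norm_inv_four_smul_sub_one_le _

lemma norm_unitarize_mul_star_self_sub_one_le (a : A) :
    ‖unitarize a * star (unitarize a) - 1‖ ≤ ‖a * star a - 1‖ ^ 2 * (‖a * star a - 1‖ + 3) / 4 := by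
  rw [unitarize_mul_star_self]
  exact norm_inv_four_smul_sub_one_le _

lemma norm_unitarize_sub_self_le (a : A) : ‖unitarize a - a‖ ≤ ‖a‖ * ‖star a * a - 1‖ / 2 := by
  have key : unitarize a - a = -((2⁻¹ : ℂ) • (a * (star a * a - 1))) := by
    have : a * (3 - star a * a) = (2 : ℂ) • a - a * (star a * a - 1) := by
      rw [ofNat_smul_eq_nsmul (R := ℂ)]
      noncomm_ring
    rw [unitarize, this, smul_sub, smul_smul]
    norm_num
  rw [key, norm_neg, norm_smul, norm_inv, Complex.norm_ofNat, inv_mul_eq_div]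
  gcongr
  exact norm_mul_le _ _

lemma continuous_unitarize : Continuous (unitarize : A → A) := by
  unfold unitarize
  fun_prop

lemma map_unitarize {B F : Type*} [CStarAlgebra B]
    [FunLike F A B] [AlgHomClass F ℂ A B] [StarHomClass F A B] (κ : F) (a : A) :
    κ (unitarize a) = unitarize (κ a) := by
  simp [unitarize, map_smul, map_mul, map_sub, map_star, map_ofNat]

lemma unitarize_of_mem_unitary {u : A} (hu : u ∈ unitary A) : unitarize u = u := by
  rw [unitarize, Unitary.star_mul_self_of_mem hu]
  have : u * (3 - 1) = (2 : ℂ) • u := by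
    rw [ofNat_smul_eq_nsmul (R := ℂ)]
    noncomm_ring
  rw [this, smul_smul]
  norm_num

end Unitarize

section Average

variable {Γ : Type*} [Group Γ] [MeasurableSpace Γ] (μ : Measure Γ) {A : Type*} [CStarAlgebra A]

noncomputable def repAverage (ρ : Γ → A) (g : Γ) : A := ∫ h, ρ (g * h) * star (ρ h) ∂μ

lemma star_repAverage [MeasurableMul Γ] [μ.IsMulLeftInvariant] (ρ : Γ → A) (g : Γ) :
    star (repAverage μ ρ g) = repAverage μ ρ g⁻¹ := by
  have hshift := integral_mul_left_eq_self (μ := μ) (fun h ↦ ρ h * star (ρ (g * h))) g⁻¹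
  simp only [mul_inv_cancel_left] at hshift
  rw [repAverage, repAverage, hshift, ← integral_star]
  simp

lemma repAverage_eq_self [IsProbabilityMeasure μ] {σ : Γ → A} (hσU : ∀ g, σ g ∈ unitary A)
    (hσ : ∀ g h, σ (g * h) = σ g * σ h) : repAverage μ σ = σ := by
  ext g
  simp [repAverage, hσ, mul_assoc, Unitary.mul_star_self_of_mem (hσU _)]

noncomputable def unitarizedAverage (ρ : Γ → A) (g : Γ) : A := unitarize (repAverage μ ρ g)

lemma unitarizedAverage_eq_self [IsProbabilityMeasure μ] {σ : Γ → A}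
    (hσU : ∀ g, σ g ∈ unitary A) (hσ : ∀ g h, σ (g * h) = σ g * σ h) :
    unitarizedAverage μ σ = σ := by
  ext g
  rw [unitarizedAverage, repAverage_eq_self μ hσU hσ, unitarize_of_mem_unitary (hσU g)]

end Average

section RepAverageCompact

variable {Γ : Type*} [Group Γ] [TopologicalSpace Γ] [ContinuousMul Γ] [CompactSpace Γ]
  [MeasurableSpace Γ] [BorelSpace Γ] (μ : Measure Γ) [IsProbabilityMeasure μ]
  {A : Type*} [CStarAlgebra A]

lemma continuous_repAverage {ρ : Γ → A} (hρ : Continuous ρ) : Continuous (repAverage μ ρ) := by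
  let F : C(Γ × Γ, A) := ⟨fun p ↦ ρ (p.1 * p.2) * star (ρ p.2), by fun_prop⟩
  exact (continuous_integral_continuousMap μ).comp F.curry.continuous

lemma map_repAverage {B : Type*} [CStarAlgebra B] (κ : A →⋆ₐ[ℂ] B) {ρ : Γ → A}
    (hρ : Continuous ρ) (g : Γ) : κ (repAverage μ ρ g) = repAverage μ (κ ∘ ρ) g := by
  have := (⟨κ.toLinearMap, continuous_starAlgHom κ⟩ : A →L[ℂ] B).integral_comp_comm
    ((by fun_prop : Continuous fun h ↦ ρ (g * h) * star (ρ h)).integrable_of_compactSpace μ)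
  simp only [repAverage, Function.comp_apply, ← map_star, ← map_mul]
  exact this.symm

lemma continuous_unitarizedAverage {ρ : Γ → A} (hρ : Continuous ρ) :
    Continuous (unitarizedAverage μ ρ) :=
  continuous_unitarize.comp (continuous_repAverage μ hρ)

lemma map_unitarizedAverage {B : Type*} [CStarAlgebra B] (κ : A →⋆ₐ[ℂ] B) {ρ : Γ → A}
    (hρ : Continuous ρ) (g : Γ) : κ (unitarizedAverage μ ρ g) = unitarizedAverage μ (κ ∘ ρ) g := by
  rw [unitarizedAverage, map_unitarize, map_repAverage μ κ hρ, unitarizedAverage]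

-- For an `ε`-representation both summands are products of two `O(ε)` factors: this is why
-- averaging squares the multiplicativity defect.
lemma repAverage_mul_sub_mul [μ.IsMulLeftInvariant] {ρ : Γ → A} (hρ : Continuous ρ) (g₁ g₂ : Γ) :
    repAverage μ ρ (g₁ * g₂) - repAverage μ ρ g₁ * repAverage μ ρ g₂ =
      ρ g₁ * ((1 - repAverage μ ρ 1) * repAverage μ ρ g₂) +
        ∫ h, (ρ (g₁ * h) - ρ g₁ * ρ h) *
          (star (ρ (g₂⁻¹ * h)) - star (ρ h) * repAverage μ ρ g₂) ∂μ := by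
  set f := repAverage μ ρ
  have hshift : ∀ g, ∫ h, ρ (g * h) * star (ρ (g₂⁻¹ * h)) ∂μ = f (g * g₂) := fun g ↦ by
    simpa [f, repAverage, mul_assoc] using
      (integral_mul_left_eq_self (μ := μ) (fun h ↦ ρ (g * h) * star (ρ (g₂⁻¹ * h))) g₂).symm
  have hR : ∫ h, ρ h * star (ρ (g₂⁻¹ * h)) ∂μ = f g₂ := by simpa using hshift 1
  have hS : ∫ h, ρ h * star (ρ h) ∂μ = f 1 := by simp [f, repAverage]
  have hpt : ∀ h, (ρ (g₁ * h) - ρ g₁ * ρ h) * (star (ρ (g₂⁻¹ * h)) - star (ρ h) * f g₂) =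
      ρ (g₁ * h) * star (ρ (g₂⁻¹ * h)) - ρ (g₁ * h) * star (ρ h) * f g₂ -
        (ρ g₁ * (ρ h * star (ρ (g₂⁻¹ * h))) - ρ g₁ * (ρ h * star (ρ h) * f g₂)) := fun h ↦ by
    noncomm_ring
  have hint : ∀ {φ : Γ → A}, Continuous φ → Integrable φ μ := (·.integrable_of_compactSpace μ)
  simp_rw [hpt]
  rw [integral_sub, integral_sub, integral_sub, integral_mul_const_of_integrable,
    integral_const_mul_of_integrable, integral_const_mul_of_integrable,
    integral_mul_const_of_integrable, hshift, hR, hS]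
  · noncomm_ring
  all_goals exact hint (by fun_prop)

lemma continuous_iterate_unitarizedAverage {ρ : Γ → A} (hρ : Continuous ρ) (n : ℕ) :
    Continuous ((unitarizedAverage μ)^[n] ρ) := by
  induction n with
  | zero => exact hρ
  | succ n ih => rw [Function.iterate_succ_apply']; exact continuous_unitarizedAverage μ ih

lemma map_iterate_unitarizedAverage {B : Type*} [CStarAlgebra B] (κ : A →⋆ₐ[ℂ] B) {ρ : Γ → A}
    (hρ : Continuous ρ) (hκU : ∀ g, κ (ρ g) ∈ unitary B)
    (hκ : ∀ g h, κ (ρ (g * h)) = κ (ρ g) * κ (ρ h)) (n : ℕ) :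
    κ ∘ (unitarizedAverage μ)^[n] ρ = κ ∘ ρ := by
  induction n with
  | zero => rfl
  | succ n ih =>
    ext g
    rw [Function.comp_apply, Function.iterate_succ_apply',
      map_unitarizedAverage μ κ (continuous_iterate_unitarizedAverage μ hρ n), ih,
      unitarizedAverage_eq_self μ (σ := κ ∘ ρ) hκU hκ]

end RepAverageCompact

section ApproxRep

variable {Γ : Type*} [Group Γ] [TopologicalSpace Γ] {A : Type*} [CStarAlgebra A]

structure IsApproxUnitaryRep (ε : ℝ) (ρ : Γ → A) : Prop where
  continuous : Continuous ρ
  norm_star_mul_self_sub_one_le : ∀ g, ‖star (ρ g) * ρ g - 1‖ ≤ ε ^ 2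
  norm_mul_star_self_sub_one_le : ∀ g, ‖ρ g * star (ρ g) - 1‖ ≤ ε ^ 2
  norm_map_mul_sub_le : ∀ g h, ‖ρ (g * h) - ρ g * ρ h‖ ≤ ε

namespace IsApproxUnitaryRep

variable {ε : ℝ} {ρ : Γ → A}

lemma nonneg (h : IsApproxUnitaryRep ε ρ) : 0 ≤ ε :=
  (norm_nonneg _).trans (h.norm_map_mul_sub_le 1 1)

lemma mono (h : IsApproxUnitaryRep ε ρ) {δ : ℝ} (hεδ : ε ≤ δ) : IsApproxUnitaryRep δ ρ := by
  have hsq : ε ^ 2 ≤ δ ^ 2 := pow_le_pow_left₀ h.nonneg hεδ 2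
  exact ⟨h.continuous, fun g ↦ (h.norm_star_mul_self_sub_one_le g).trans hsq,
    fun g ↦ (h.norm_mul_star_self_sub_one_le g).trans hsq,
    fun g k ↦ (h.norm_map_mul_sub_le g k).trans hεδ⟩

lemma norm_le (h : IsApproxUnitaryRep ε ρ) (g : Γ) : ‖ρ g‖ ≤ 1 + ε ^ 2 := by
  have hone : ‖(1 : A)‖ ≤ 1 := by
    rcases subsingleton_or_nontrivial A with _ | _
    · simp [Subsingleton.elim (1 : A) 0]
    · exact CStarRing.norm_one.le
  have hsq : ‖ρ g‖ * ‖ρ g‖ ≤ 1 + ε ^ 2 := by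
    rw [← CStarRing.norm_star_mul_self, ← add_sub_cancel (1 : A) (star (ρ g) * ρ g)]
    exact norm_add_le_of_le hone (h.norm_star_mul_self_sub_one_le g)
  nlinarith [norm_nonneg (ρ g), sq_nonneg ε]

lemma mem_unitary_and_map_mul_of_tendsto {S : ℕ → Γ → A} {e : ℕ → ℝ}
    (hS : ∀ n, IsApproxUnitaryRep (e n) (S n)) (he : Tendsto e atTop (𝓝 0)) {ρ : Γ → A}
    (hlim : ∀ g, Tendsto (S · g) atTop (𝓝 (ρ g))) :
    (∀ g, ρ g ∈ unitary A) ∧ ∀ g h, ρ (g * h) = ρ g * ρ h := by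
  have he2 : Tendsto (e · ^ 2) atTop (𝓝 0) := by simpa using he.pow 2
  refine ⟨fun g ↦ Unitary.mem_iff.2 ⟨?_, ?_⟩, fun g k ↦ ?_⟩
  · exact eq_of_tendsto_of_norm_sub_le ((hlim g).star.mul (hlim g)) tendsto_const_nhds he2
      fun n ↦ (hS n).norm_star_mul_self_sub_one_le g
  · exact eq_of_tendsto_of_norm_sub_le ((hlim g).mul (hlim g).star) tendsto_const_nhds he2
      fun n ↦ (hS n).norm_mul_star_self_sub_one_le g
  · exact eq_of_tendsto_of_norm_sub_le (hlim (g * k)) ((hlim g).mul (hlim k)) he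
      fun n ↦ (hS n).norm_map_mul_sub_le g k

variable [MeasurableSpace Γ] (μ : Measure Γ) [IsProbabilityMeasure μ]

lemma norm_repAverage_le (h : IsApproxUnitaryRep ε ρ) (g : Γ) :
    ‖repAverage μ ρ g‖ ≤ (1 + ε ^ 2) ^ 2 := by
  refine norm_integral_le_of_forall_norm_le μ fun k ↦ ?_
  rw [sq]
  exact norm_mul_le_of_le (h.norm_le _) ((norm_star _).trans_le (h.norm_le k))

variable [CompactSpace Γ] [BorelSpace Γ]

lemma norm_repAverage_one_sub_one_le (h : IsApproxUnitaryRep ε ρ) :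
    ‖repAverage μ ρ 1 - 1‖ ≤ ε ^ 2 := by
  have hρ := h.continuous
  have hint : Integrable (fun k ↦ ρ k * star (ρ k)) μ :=
    (by fun_prop : Continuous _).integrable_of_compactSpace μ
  have : repAverage μ ρ 1 - 1 = ∫ k, (ρ k * star (ρ k) - 1) ∂μ := by
    simp [repAverage, integral_sub hint (integrable_const _)]
  rw [this]
  exact norm_integral_le_of_forall_norm_le μ h.norm_mul_star_self_sub_one_le

variable [ContinuousMul Γ]

lemma norm_repAverage_sub_le (h : IsApproxUnitaryRep ε ρ) (g : Γ) :
    ‖repAverage μ ρ g - ρ g‖ ≤ (1 + ε ^ 2) * (ε + ε ^ 2) := by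
  have hρ := h.continuous
  have hint : Integrable (fun k ↦ ρ (g * k) * star (ρ k)) μ :=
    (by fun_prop : Continuous _).integrable_of_compactSpace μ
  have : repAverage μ ρ g - ρ g = ∫ k, (ρ (g * k) * star (ρ k) - ρ g) ∂μ := by
    simp [repAverage, integral_sub hint (integrable_const _)]
  rw [this]
  refine norm_integral_le_of_forall_norm_le μ fun k ↦ ?_
  rw [show ρ (g * k) * star (ρ k) - ρ g =
    (ρ (g * k) - ρ g * ρ k) * star (ρ k) + ρ g * (ρ k * star (ρ k) - 1) by noncomm_ring]
  calc _ ≤ ε * (1 + ε ^ 2) + (1 + ε ^ 2) * ε ^ 2 :=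
        norm_add_le_of_le
          (norm_mul_le_of_le (h.norm_map_mul_sub_le g k) ((norm_star _).trans_le (h.norm_le k)))
          (norm_mul_le_of_le (h.norm_le g) (h.norm_mul_star_self_sub_one_le k))
    _ = _ := by ring

lemma norm_star_sub_star_mul_repAverage_le (h : IsApproxUnitaryRep ε ρ) (g k : Γ) :
    ‖star (ρ (g⁻¹ * k)) - star (ρ k) * repAverage μ ρ g‖ ≤
      (1 + ε ^ 2) * (2 + ε ^ 2) * (ε + ε ^ 2) := by
  -- `ρ (g⁻¹ k)⋆ ≈ ρ(k)⋆ ρ(g)` since `ρ(g)⋆ ρ(g) ≈ 1` and `ρ(g) ρ(g⁻¹ k) ≈ ρ(k)`; then `ρ g ≈ f g`.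
  have hsplit : star (ρ (g⁻¹ * k)) - star (ρ k) * repAverage μ ρ g =
      -star ((star (ρ g) * ρ g - 1) * ρ (g⁻¹ * k) +
        star (ρ g) * (ρ (g * (g⁻¹ * k)) - ρ g * ρ (g⁻¹ * k))) -
      star (ρ k) * (repAverage μ ρ g - ρ g) := by
    simp only [mul_inv_cancel_left, star_add, star_mul, star_sub, star_star, star_one]
    noncomm_ring
  have hfirst : ‖star ((star (ρ g) * ρ g - 1) * ρ (g⁻¹ * k) +
      star (ρ g) * (ρ (g * (g⁻¹ * k)) - ρ g * ρ (g⁻¹ * k)))‖ ≤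
        ε ^ 2 * (1 + ε ^ 2) + (1 + ε ^ 2) * ε := by
    rw [norm_star]
    exact norm_add_le_of_le (norm_mul_le_of_le (h.norm_star_mul_self_sub_one_le g) (h.norm_le _))
      (norm_mul_le_of_le ((norm_star _).trans_le (h.norm_le g)) (h.norm_map_mul_sub_le _ _))
  rw [hsplit]
  calc _ ≤ (ε ^ 2 * (1 + ε ^ 2) + (1 + ε ^ 2) * ε) + (1 + ε ^ 2) * ((1 + ε ^ 2) * (ε + ε ^ 2)) :=
        norm_sub_le_of_le ((norm_neg _).trans_le hfirst)
          (norm_mul_le_of_le ((norm_star _).trans_le (h.norm_le k)) (h.norm_repAverage_sub_le μ g))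
    _ = _ := by ring

variable [μ.IsMulLeftInvariant]

lemma norm_repAverage_mul_sub_le (h : IsApproxUnitaryRep ε ρ) (hε : ε ≤ 1 / 17) (g₁ g₂ : Γ) :
    ‖repAverage μ ρ (g₁ * g₂) - repAverage μ ρ g₁ * repAverage μ ρ g₂‖ ≤ 4 * ε ^ 2 := by
  have hε0 := h.nonneg
  have hK : (1 + ε ^ 2) ^ 3 + (1 + ε ^ 2) * (2 + ε ^ 2) * (1 + ε) ≤ 4 :=
    calc _ ≤ (1 + (1 / 17 : ℝ) ^ 2) ^ 3 + (1 + (1 / 17 : ℝ) ^ 2) * (2 + (1 / 17 : ℝ) ^ 2) *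
          (1 + 1 / 17) := by gcongr
      _ ≤ 4 := by norm_num
  rw [repAverage_mul_sub_mul μ h.continuous]
  calc _ ≤ (1 + ε ^ 2) * (ε ^ 2 * (1 + ε ^ 2) ^ 2) +
        ε * ((1 + ε ^ 2) * (2 + ε ^ 2) * (ε + ε ^ 2)) :=
        norm_add_le_of_le
          (norm_mul_le_of_le (h.norm_le g₁) (norm_mul_le_of_le
            ((norm_sub_rev _ _).trans_le (h.norm_repAverage_one_sub_one_le μ))
            (h.norm_repAverage_le μ g₂)))
          (norm_integral_le_of_forall_norm_le μ fun k ↦ norm_mul_le_of_le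
            (h.norm_map_mul_sub_le g₁ k) (h.norm_star_sub_star_mul_repAverage_le μ g₂ k))
    _ ≤ 4 * ε ^ 2 := by nlinarith [mul_le_mul_of_nonneg_left hK (sq_nonneg ε)]

lemma norm_star_repAverage_mul_self_sub_one_le (h : IsApproxUnitaryRep ε ρ) (hε : ε ≤ 1 / 17)
    (g : Γ) : ‖star (repAverage μ ρ g) * repAverage μ ρ g - 1‖ ≤ 5 * ε ^ 2 := by
  rw [star_repAverage, show repAverage μ ρ g⁻¹ * repAverage μ ρ g - 1 = (repAverage μ ρ 1 - 1) -
      (repAverage μ ρ (g⁻¹ * g) - repAverage μ ρ g⁻¹ * repAverage μ ρ g) by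
    rw [inv_mul_cancel]; abel]
  linarith [norm_sub_le_of_le (h.norm_repAverage_one_sub_one_le μ)
    (h.norm_repAverage_mul_sub_le μ hε g⁻¹ g)]

lemma norm_repAverage_mul_star_self_sub_one_le (h : IsApproxUnitaryRep ε ρ) (hε : ε ≤ 1 / 17)
    (g : Γ) : ‖repAverage μ ρ g * star (repAverage μ ρ g) - 1‖ ≤ 5 * ε ^ 2 := by
  rw [star_repAverage, show repAverage μ ρ g * repAverage μ ρ g⁻¹ - 1 = (repAverage μ ρ 1 - 1) -
      (repAverage μ ρ (g * g⁻¹) - repAverage μ ρ g * repAverage μ ρ g⁻¹) by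
    rw [mul_inv_cancel]; abel]
  linarith [norm_sub_le_of_le (h.norm_repAverage_one_sub_one_le μ)
    (h.norm_repAverage_mul_sub_le μ hε g g⁻¹)]

lemma norm_unitarizedAverage_sub_repAverage_le (h : IsApproxUnitaryRep ε ρ) (hε : ε ≤ 1 / 17)
    (g : Γ) : ‖unitarizedAverage μ ρ g - repAverage μ ρ g‖ ≤ 3 * ε ^ 2 := by
  have hε0 := h.nonneg
  have hK : 5 * (1 + ε ^ 2) ^ 2 / 2 ≤ 3 :=
    calc _ ≤ 5 * (1 + (1 / 17 : ℝ) ^ 2) ^ 2 / 2 := by gcongr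
      _ ≤ 3 := by norm_num
  calc _ ≤ (1 + ε ^ 2) ^ 2 * (5 * ε ^ 2) / 2 := by
        refine (norm_unitarize_sub_self_le (repAverage μ ρ g)).trans ?_
        gcongr
        exacts [h.norm_repAverage_le μ g, h.norm_star_repAverage_mul_self_sub_one_le μ hε g]
    _ ≤ 3 * ε ^ 2 := by nlinarith [mul_le_mul_of_nonneg_left hK (sq_nonneg ε)]

lemma norm_unitarizedAverage_sub_le (h : IsApproxUnitaryRep ε ρ) (hε : ε ≤ 1 / 17) (g : Γ) :
    ‖unitarizedAverage μ ρ g - ρ g‖ ≤ 2 * ε := by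
  have hε0 := h.nonneg
  have hK : 3 * ε + (1 + ε ^ 2) * (1 + ε) ≤ 2 :=
    calc _ ≤ 3 * (1 / 17 : ℝ) + (1 + (1 / 17 : ℝ) ^ 2) * (1 + 1 / 17) := by gcongr
      _ ≤ 2 := by norm_num
  calc _ ≤ 3 * ε ^ 2 + (1 + ε ^ 2) * (ε + ε ^ 2) := by
        rw [← sub_add_sub_cancel _ (repAverage μ ρ g)]
        exact norm_add_le_of_le (h.norm_unitarizedAverage_sub_repAverage_le μ hε g)
          (h.norm_repAverage_sub_le μ g)
    _ ≤ 2 * ε := by nlinarith [mul_le_mul_of_nonneg_left hK hε0]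

lemma norm_unitarizedAverage_mul_sub_le (h : IsApproxUnitaryRep ε ρ) (hε : ε ≤ 1 / 17)
    (g₁ g₂ : Γ) : ‖unitarizedAverage μ ρ (g₁ * g₂) - unitarizedAverage μ ρ g₁ *
      unitarizedAverage μ ρ g₂‖ ≤ 17 * ε ^ 2 := by
  have hε0 := h.nonneg
  set f := repAverage μ ρ
  set u := unitarizedAverage μ ρ
  have hu : ∀ g, ‖u g - f g‖ ≤ 3 * ε ^ 2 := h.norm_unitarizedAverage_sub_repAverage_le μ hε
  have hf : ∀ g, ‖f g‖ ≤ (1 + ε ^ 2) ^ 2 := h.norm_repAverage_le μ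
  have hK : 7 + 3 * (1 + ε ^ 2) ^ 2 + 3 * ((1 + ε ^ 2) ^ 2 + 3 * ε ^ 2) ≤ 17 :=
    calc _ ≤ 7 + 3 * (1 + (1 / 17 : ℝ) ^ 2) ^ 2 + 3 * ((1 + (1 / 17 : ℝ) ^ 2) ^ 2 +
          3 * (1 / 17 : ℝ) ^ 2) := by gcongr
      _ ≤ 17 := by norm_num
  rw [show u (g₁ * g₂) - u g₁ * u g₂ = (u (g₁ * g₂) - f (g₁ * g₂)) + (f (g₁ * g₂) - f g₁ * f g₂) +
    ((f g₁ - u g₁) * f g₂ + u g₁ * (f g₂ - u g₂)) by noncomm_ring]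
  calc _ ≤ 3 * ε ^ 2 + 4 * ε ^ 2 +
        (3 * ε ^ 2 * (1 + ε ^ 2) ^ 2 + ((1 + ε ^ 2) ^ 2 + 3 * ε ^ 2) * (3 * ε ^ 2)) :=
        norm_add_le_of_le (norm_add_le_of_le (hu _) (h.norm_repAverage_mul_sub_le μ hε g₁ g₂))
          (norm_add_le_of_le (norm_mul_le_of_le ((norm_sub_rev _ _).trans_le (hu g₁)) (hf g₂))
            (norm_mul_le_of_le
              ((norm_le_norm_add_norm_sub' _ (f g₁)).trans (add_le_add (hf g₁) (hu g₁)))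
              ((norm_sub_rev _ _).trans_le (hu g₂))))
    _ ≤ 17 * ε ^ 2 := by nlinarith [mul_le_mul_of_nonneg_left hK (sq_nonneg ε)]

lemma unitarizedAverage (h : IsApproxUnitaryRep ε ρ) (hε : ε ≤ 1 / 17) :
    IsApproxUnitaryRep (17 * ε ^ 2) (unitarizedAverage μ ρ) := by
  have hε0 := h.nonneg
  have hcube : ∀ w : ℝ, 0 ≤ w → w ≤ 5 * ε ^ 2 → w ^ 2 * (w + 3) / 4 ≤ (17 * ε ^ 2) ^ 2 := by
    intro w hw0 hw
    have hK : 25 * (5 * ε ^ 2 + 3) / 4 ≤ 289 :=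
      calc _ ≤ 25 * (5 * (1 / 17 : ℝ) ^ 2 + 3) / 4 := by gcongr
        _ ≤ 289 := by norm_num
    calc _ ≤ (5 * ε ^ 2) ^ 2 * (5 * ε ^ 2 + 3) / 4 := by gcongr
      _ ≤ (17 * ε ^ 2) ^ 2 := by nlinarith [mul_le_mul_of_nonneg_left hK (pow_nonneg hε0 4)]
  refine ⟨continuous_unitarizedAverage μ h.continuous, fun g ↦ ?_, fun g ↦ ?_, fun g₁ g₂ ↦ ?_⟩
  · exact (norm_star_unitarize_mul_self_sub_one_le _).trans
      (hcube _ (norm_nonneg _) (h.norm_star_repAverage_mul_self_sub_one_le μ hε g))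
  · exact (norm_unitarize_mul_star_self_sub_one_le _).trans
      (hcube _ (norm_nonneg _) (h.norm_repAverage_mul_star_self_sub_one_le μ hε g))
  · exact h.norm_unitarizedAverage_mul_sub_le μ hε g₁ g₂

lemma iterate_unitarizedAverage {r : ℝ} (h : IsApproxUnitaryRep r ρ) (hr : r < 1 / 17) (n : ℕ) :
    IsApproxUnitaryRep (r * (17 * r) ^ n) ((_root_.unitarizedAverage μ)^[n] ρ) := by
  have hr0 := h.nonneg
  induction n with
  | zero => simpa using h
  | succ n ih =>
    have hle : r * (17 * r) ^ n ≤ r :=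
      mul_le_of_le_one_right hr0 (pow_le_one₀ (by positivity) (by linarith))
    rw [Function.iterate_succ_apply']
    refine (ih.unitarizedAverage μ (by linarith)).mono ?_
    rw [pow_succ (17 * r) n]
    nlinarith [mul_le_mul_of_nonneg_left hle (by positivity : 0 ≤ 17 * (r * (17 * r) ^ n))]

lemma dist_iterate_unitarizedAverage_le {r : ℝ} (h : IsApproxUnitaryRep r ρ) (hr : r < 1 / 17)
    (n : ℕ) (g : Γ) :
    dist ((_root_.unitarizedAverage μ)^[n] ρ g) ((_root_.unitarizedAverage μ)^[n + 1] ρ g) ≤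
      2 * r * (17 * r) ^ n := by
  have hn := h.iterate_unitarizedAverage μ hr n
  have hr0 := h.nonneg
  have hle : r * (17 * r) ^ n ≤ 1 / 17 :=
    (mul_le_of_le_one_right hr0 (pow_le_one₀ (by positivity) (by linarith))).trans hr.le
  rw [dist_comm, dist_eq_norm, Function.iterate_succ_apply', mul_assoc]
  exact hn.norm_unitarizedAverage_sub_le μ hle g

end IsApproxUnitaryRep

end ApproxRep

theorem stmt4 {Γ : Type*} [Group Γ] [TopologicalSpace Γ] [IsTopologicalGroup Γ] [CompactSpace Γ]
    [MeasurableSpace Γ] [BorelSpace Γ]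
    {A : Type*} [NormedRing A] [StarRing A] [CStarRing A] [CompleteSpace A]
    [NormedAlgebra ℂ A] [StarModule ℂ A]
    {B : Type*} [NormedRing B] [StarRing B] [CStarRing B] [CompleteSpace B]
    [NormedAlgebra ℂ B] [StarModule ℂ B]
    (κ : A →⋆ₐ[ℂ] B)
    (r : ℝ) (hr0 : 0 ≤ r) (hr : r < 1 / 17)
    (ρ₀ : Γ → A) (hρ₀U : ∀ g, ρ₀ g ∈ unitary A) (hρ₀cont : Continuous ρ₀)
    (hρ₀ : ∀ g h, ‖ρ₀ (g * h) - ρ₀ g * ρ₀ h‖ ≤ r)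
    (hκρ₀ : ∀ g h, κ (ρ₀ (g * h)) = κ (ρ₀ g) * κ (ρ₀ h)) :
    ∃ ρ : Γ → A, (∀ g, ρ g ∈ unitary A) ∧ Continuous ρ ∧
      (∀ g h, ρ (g * h) = ρ g * ρ h) ∧
      (∀ g, ‖ρ g - ρ₀ g‖ ≤ 2 * r / (1 - 17 * r)) ∧
      (∀ g, κ (ρ g) = κ (ρ₀ g)) := by
  let : CStarAlgebra A := {}
  let : CStarAlgebra B := {}
  let μ := Measure.haarMeasure (⊤ : TopologicalSpace.PositiveCompacts Γ)
  have : IsProbabilityMeasure μ := ⟨Measure.haarMeasure_self (K₀ := ⊤)⟩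
  have h₀ : IsApproxUnitaryRep r ρ₀ :=
    ⟨hρ₀cont, fun g ↦ by simpa [Unitary.star_mul_self_of_mem (hρ₀U g)] using sq_nonneg r,
      fun g ↦ by simpa [Unitary.mul_star_self_of_mem (hρ₀U g)] using sq_nonneg r, hρ₀⟩
  have hq0 : 0 ≤ 17 * r := by linarith
  have hq1 : 17 * r < 1 := by linarith
  obtain ⟨ρ, hρcont, hlim, hdist⟩ := exists_continuous_tendsto_of_dist_le_geometric hq0 hq1
    (fun n ↦ (h₀.iterate_unitarizedAverage μ hr n).continuous)
    (h₀.dist_iterate_unitarizedAverage_le μ hr)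
  have he : Tendsto (fun n ↦ r * (17 * r) ^ n) atTop (𝓝 0) := by
    simpa using (tendsto_pow_atTop_nhds_zero_of_lt_one hq0 hq1).const_mul r
  obtain ⟨hρU, hρmul⟩ := IsApproxUnitaryRep.mem_unitary_and_map_mul_of_tendsto
    (h₀.iterate_unitarizedAverage μ hr) he hlim
  have hκ := map_iterate_unitarizedAverage μ κ hρ₀cont (fun g ↦ Unitary.map_mem κ (hρ₀U g)) hκρ₀
  refine ⟨ρ, hρU, hρcont, hρmul, fun g ↦ ?_, fun g ↦ ?_⟩
  · rw [← dist_eq_norm, dist_comm]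
    exact hdist g
  · exact tendsto_nhds_unique (((continuous_starAlgHom κ).tendsto _).comp (hlim g))
      (tendsto_const_nhds.congr fun n ↦ (congrFun (hκ n) g).symm)
end

section
/- Let A₁, A₂ be unital C*-algebras, φ : A₁ → A₂ a surjective unital *-homomorphism, F a finite dimensional C*-algebra, λ₁ : F → A₁ a unital *-homomorphism, and λ₂ = φ ∘ λ₁. For s = 1,2 let B_s be the relative commutant of λ_s(F) in A_s. Then φ restricts to a surjective homomorphism from B₁ onto B₂. -/
/-!
The regular trace `τ z = tr (L_z)` of a finite-dimensional C⋆-algebra `F` is faithful: `L_z` has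
the same spectrum as `z`, so for `0 ≤ z ≠ 0` its trace is a sum of nonnegative eigenvalues that
are not all zero. Hence `(p, q) ↦ τ (p q)` is nondegenerate, and for a basis `bᵢ` with dual basis
`dᵢ` one has `∑ bᵢ dᵢ = 1` and `∑ a bᵢ ⊗ dᵢ = ∑ bᵢ ⊗ dᵢ a`. Consequently, for any `λ : F → A`,
`E u = ∑ λ (bᵢ) u λ (dᵢ)` lands in the relative commutant of `λ F`, fixes that commutant
pointwise, and commutes with algebra homomorphisms. So if `φ a = b` with `b` in the relative
commutant in `A₂`, then `E a` lifts `b` to the relative commutant in `A₁`.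
-/

open LinearMap Module

section RegularTrace

variable (K F : Type*) [Field K] [Ring F] [Algebra K F]

noncomputable def regularTrace : F →ₗ[K] K :=
  trace K F ∘ₗ (Algebra.lmul K F).toLinearMap

noncomputable def regularTraceForm : LinearMap.BilinForm K F :=
  (LinearMap.mul K F).compr₂ (regularTrace K F)

variable {K F}

lemma regularTrace_apply (z : F) : regularTrace K F z = trace K F (Algebra.lmul K F z) := rfl

@[simp]
lemma regularTraceForm_apply (p q : F) :
    regularTraceForm K F p q = regularTrace K F (p * q) := rfl

lemma regularTrace_mul_comm (p q : F) :
    regularTrace K F (p * q) = regularTrace K F (q * p) := by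
  simp only [regularTrace_apply, map_mul, trace_mul_comm]

lemma regularTraceForm_isSymm : (regularTraceForm K F).IsSymm :=
  ⟨fun p q => regularTrace_mul_comm p q⟩

section DualBasis

variable (hF : (regularTraceForm K F).Nondegenerate)
  {ι : Type*} [Fintype ι] [DecidableEq ι] (b : Basis ι K F)

lemma repr_eq_regularTrace_dualBasis_mul (z : F) (i : ι) :
    b.repr z i = regularTrace K F ((regularTraceForm K F).dualBasis hF b i * z) := by
  conv_lhs => rw [← BilinForm.dualBasis_dualBasis hF regularTraceForm_isSymm b]
  rw [BilinForm.dualBasis_repr_apply, regularTraceForm_apply, regularTrace_mul_comm]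

lemma sum_regularTrace_mul_smul_dualBasis (z : F) :
    ∑ i, regularTrace K F (z * b i) • (regularTraceForm K F).dualBasis hF b i = z := by
  simpa using ((regularTraceForm K F).dualBasis hF b).sum_repr z

lemma sum_regularTrace_dualBasis_mul_smul (z : F) :
    ∑ i, regularTrace K F ((regularTraceForm K F).dualBasis hF b i * z) • b i = z := by
  simpa [repr_eq_regularTrace_dualBasis_mul hF] using b.sum_repr z

lemma regularTrace_eq_sum_dualBasis_mul [FiniteDimensional K F] (q : F) :
    regularTrace K F q =
      ∑ i, regularTrace K F ((regularTraceForm K F).dualBasis hF b i * (q * b i)) := by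
  rw [regularTrace_apply, trace_eq_matrix_trace K b, Matrix.trace]
  simp [LinearMap.toMatrix_apply, repr_eq_regularTrace_dualBasis_mul hF]

lemma sum_basis_mul_dualBasis [FiniteDimensional K F] :
    ∑ i, b i * (regularTraceForm K F).dualBasis hF b i = 1 := by
  refine sub_eq_zero.mp (hF.1 _ fun q => ?_)
  simp only [map_sub, map_sum, LinearMap.sub_apply, LinearMap.sum_apply, regularTraceForm_apply,
    one_mul, sub_eq_zero]
  rw [regularTrace_eq_sum_dualBasis_mul hF b q]
  refine Finset.sum_congr rfl fun i _ => ?_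
  rw [mul_assoc, regularTrace_mul_comm, mul_assoc]

/-- The identity `∑ a bᵢ ⊗ dᵢ = ∑ bᵢ ⊗ dᵢ a` in `F ⊗ F`, read through an arbitrary bilinear map. -/
lemma sum_apply_mul_basis_dualBasis {M : Type*} [AddCommGroup M] [Module K M]
    (β : F →ₗ[K] F →ₗ[K] M) (a : F) :
    ∑ i, β (a * b i) ((regularTraceForm K F).dualBasis hF b i) =
      ∑ i, β (b i) ((regularTraceForm K F).dualBasis hF b i * a) := by
  set d := (regularTraceForm K F).dualBasis hF b with hd
  calc ∑ i, β (a * b i) (d i)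
      = ∑ i, ∑ j, regularTrace K F (d j * (a * b i)) • β (b j) (d i) := by
        refine Finset.sum_congr rfl fun i _ => ?_
        conv_lhs => rw [← sum_regularTrace_dualBasis_mul_smul hF b (a * b i)]
        simp only [map_sum, map_smul, LinearMap.sum_apply, LinearMap.smul_apply, hd]
    _ = ∑ j, ∑ i, regularTrace K F (d j * a * b i) • β (b j) (d i) := by
        rw [Finset.sum_comm]; simp only [mul_assoc]
    _ = ∑ j, β (b j) (d j * a) := by
        refine Finset.sum_congr rfl fun j _ => ?_
        conv_rhs => rw [← sum_regularTrace_mul_smul_dualBasis hF b (d j * a)]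
        simp only [map_sum, map_smul, hd]

end DualBasis

end RegularTrace

section CommutantExpectation

variable {K F A : Type*} [Field K] [Ring F] [Algebra K F] [Ring A] [Algebra K A]
  (hF : (regularTraceForm K F).Nondegenerate) {ι : Type*} [Fintype ι] [DecidableEq ι]
  (b : Basis ι K F) (lam : F →ₐ[K] A)

noncomputable def commutantExpectation (u : A) : A :=
  ∑ i, lam (b i) * u * lam ((regularTraceForm K F).dualBasis hF b i)

lemma commute_commutantExpectation (u : A) (a : F) :
    Commute (commutantExpectation hF b lam u) (lam a) := by
  let β : F →ₗ[K] F →ₗ[K] A := (LinearMap.mul K A).compl₁₂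
    ((LinearMap.mulRight K u).comp lam.toLinearMap) lam.toLinearMap
  have key := sum_apply_mul_basis_dualBasis hF b β a
  simp only [β, compl₁₂_apply, LinearMap.comp_apply, AlgHom.toLinearMap_apply, mulRight_apply,
    mul_apply', map_mul] at key
  simp only [Commute, SemiconjBy, commutantExpectation, Finset.sum_mul, Finset.mul_sum]
  simpa only [mul_assoc] using key.symm

lemma commutantExpectation_eq_self [FiniteDimensional K F] {u : A}
    (hu : ∀ a, Commute u (lam a)) : commutantExpectation hF b lam u = u := by
  calc commutantExpectation hF b lam u
      = ∑ i, lam (b i) * lam ((regularTraceForm K F).dualBasis hF b i) * u := by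
        refine Finset.sum_congr rfl fun i _ => ?_
        rw [mul_assoc, (hu _).eq, mul_assoc]
    _ = u := by
        simp only [← Finset.sum_mul, ← map_mul, ← map_sum, sum_basis_mul_dualBasis, map_one,
          one_mul]

lemma map_commutantExpectation {B : Type*} [Ring B] [Algebra K B] (ψ : A →ₐ[K] B) (u : A) :
    ψ (commutantExpectation hF b lam u) = commutantExpectation hF b (ψ.comp lam) (ψ u) := by
  simp [commutantExpectation]

end CommutantExpectation

lemma spectrum_lmul {R A : Type*} [CommSemiring R] [Ring A] [Algebra R A] (a : A) :
    spectrum R (Algebra.lmul R A a) = spectrum R a := by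
  ext μ
  rw [spectrum.mem_iff, spectrum.mem_iff, ← (Algebra.lmul R A).commutes, ← map_sub,
    Algebra.lmul_isUnit_iff]

section CStarAlgebra

variable {F : Type*} [CStarAlgebra F] [FiniteDimensional ℂ F]

open ComplexOrder in
lemma regularTrace_ne_zero_of_nonneg [PartialOrder F] [StarOrderedRing F] {z : F} (hz : 0 ≤ z)
    (hz0 : z ≠ 0) : regularTrace ℂ F z ≠ 0 := by
  set f : End ℂ F := Algebra.lmul ℂ F z
  have mem_roots_iff (μ : ℂ) : μ ∈ f.charpoly.roots ↔ μ ∈ spectrum ℂ z := by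
    rw [Polynomial.mem_roots f.charpoly_monic.ne_zero, ← End.mem_spectrum_iff_isRoot_charpoly,
      spectrum_lmul]
  rw [regularTrace_apply, End.trace_eq_sum_roots_charpoly_of_splits (IsAlgClosed.splits _)]
  intro hsum
  have roots_eq_zero := Multiset.all_zero_of_le_zero_le_of_sum_eq_zero
    (fun μ hμ => spectrum_nonneg_of_nonneg hz ((mem_roots_iff μ).mp hμ)) hsum
  exact hz0 <| CFC.eq_zero_of_spectrum_subset_zero (R := ℂ) z
    (fun μ hμ => roots_eq_zero μ ((mem_roots_iff μ).mpr hμ))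
    (IsSelfAdjoint.of_nonneg hz).isStarNormal

lemma regularTraceForm_nondegenerate : (regularTraceForm ℂ F).Nondegenerate := by
  let _ := CStarAlgebra.spectralOrder F
  let _ := CStarAlgebra.spectralOrderedRing F
  constructor
  · intro p hp
    by_contra hp0
    exact regularTrace_ne_zero_of_nonneg (mul_star_self_nonneg p)
      ((CStarRing.mul_star_self_ne_zero_iff p).mpr hp0) (hp (star p))
  · intro p hp
    by_contra hp0
    exact regularTrace_ne_zero_of_nonneg (star_mul_self_nonneg p)
      ((CStarRing.star_mul_self_ne_zero_iff p).mpr hp0) (hp (star p))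

end CStarAlgebra

theorem stmt8_general {A₁ : Type*} [NormedRing A₁] [StarRing A₁] [NormedAlgebra ℂ A₁]
    {A₂ : Type*} [NormedRing A₂] [StarRing A₂] [NormedAlgebra ℂ A₂]
    {F : Type*} [NormedRing F] [StarRing F] [CStarRing F] [CompleteSpace F]
    [NormedAlgebra ℂ F] [StarModule ℂ F] [FiniteDimensional ℂ F]
    (φ : A₁ →⋆ₐ[ℂ] A₂) (hφ : Function.Surjective φ)
    (lam₁ : F →⋆ₐ[ℂ] A₁) :
    ∀ b : A₂, (∀ x : F, b * φ (lam₁ x) = φ (lam₁ x) * b) →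
      ∃ a : A₁, (∀ x : F, a * lam₁ x = lam₁ x * a) ∧ φ a = b := by
  let _ : CStarAlgebra F := {}
  intro b hb
  obtain ⟨a, rfl⟩ := hφ b
  have hF : (regularTraceForm ℂ F).Nondegenerate := regularTraceForm_nondegenerate
  let e := finBasis ℂ F
  refine ⟨commutantExpectation hF e lam₁ a,
    fun x => (commute_commutantExpectation hF e _ a x).eq, ?_⟩
  calc φ (commutantExpectation hF e lam₁ a)
      = commutantExpectation hF e ((φ : A₁ →ₐ[ℂ] A₂).comp lam₁) (φ a) :=
        map_commutantExpectation hF e _ _ a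
    _ = φ a := commutantExpectation_eq_self hF e _ hb

/-- Lemma 2.8 of the paper: a surjective unital homomorphism of unital C*-algebras restricts
to a surjection between the relative commutants of a unital image of a finite dimensional
C*-algebra. -/
theorem stmt8 {A₁ : Type*} [NormedRing A₁] [StarRing A₁] [CStarRing A₁] [CompleteSpace A₁]
    [NormedAlgebra ℂ A₁] [StarModule ℂ A₁]
    {A₂ : Type*} [NormedRing A₂] [StarRing A₂] [CStarRing A₂] [CompleteSpace A₂]
    [NormedAlgebra ℂ A₂] [StarModule ℂ A₂]
    {F : Type*} [NormedRing F] [StarRing F] [CStarRing F] [CompleteSpace F]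
    [NormedAlgebra ℂ F] [StarModule ℂ F] [FiniteDimensional ℂ F]
    (φ : A₁ →⋆ₐ[ℂ] A₂) (hφ : Function.Surjective φ)
    (lam₁ : F →⋆ₐ[ℂ] A₁) :
    ∀ b : A₂, (∀ x : F, b * φ (lam₁ x) = φ (lam₁ x) * b) →
      ∃ a : A₁, (∀ x : F, a * lam₁ x = lam₁ x * a) ∧ φ a = b :=
  stmt8_general φ hφ lam₁
end

section
/- Let G be a compact group, (G, A, α) and (G, B, β) unital G-C*-algebras, and κ : A → B a unital equivariant *-homomorphism. Let w : G → U(A) be a continuous α-cocycle (w(gh) = w(g)α_g(w(h))). Suppose 0 ≤ r < 1/10 and v₀ ∈ U(A) satisfies ‖v₀ α_g(v₀)* - w(g)‖ ≤ r and κ(v₀) β_g(κ(v₀))* = κ(w(g)) for all g ∈ G. Then there exists a unitary v ∈ A with v α_g(v)* = w(g) for all g ∈ G, ‖v - v₀‖ ≤ 2r/(1 - 10r), and κ(v) = κ(v₀). -/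
/-!
Average the twisted translates of `v₀` over the Haar probability measure:
`x = ∫ w(g) α_g(v₀) dg`. Every translate is `r`-close to `v₀`, hence so is `x`, and `x` is
invertible. Invariance of the Haar measure and the cocycle identity give `α_g(x) = w(g)* x`
exactly, so `x* x` is `α`-invariant and the unitary part `v = x (x* x)^(-1/2)` of the polar
decomposition satisfies `α_g(v) = w(g)* v`. As `x* x` is `r(2 + r)`-close to `1`, functional
calculus keeps `v` close to `x`. The hypothesis on `κ(v₀)` says that every translate is mapped
to `κ(v₀)` by `κ`, so `κ(x) = κ(v₀)` is unitary and is its own unitary part.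
-/

open MeasureTheory
open scoped CStarAlgebra

theorem abs_inv_sqrt_sub_one_le {t δ : ℝ} (hδ : δ < 1) (ht : |t - 1| ≤ δ) :
    |(√t)⁻¹ - 1| ≤ δ / ((1 - δ) * (2 - δ)) := by
  have hδ0 : 0 ≤ δ := (abs_nonneg _).trans ht
  have hu2 : √t ^ 2 = t := Real.sq_sqrt (by linarith [(abs_le.mp ht).1])
  have hu : 1 - δ ≤ √t := by nlinarith [Real.sqrt_nonneg t, (abs_le.mp ht).1]
  have hu0 : 0 < √t := by linarith
  have hdiff : (√t)⁻¹ - 1 = -(t - 1) / (√t * (1 + √t)) := by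
    field_simp
    linear_combination -hu2
  calc |(√t)⁻¹ - 1| = |t - 1| / (√t * (1 + √t)) := by
        rw [hdiff, abs_div, abs_neg, abs_of_pos (mul_pos hu0 (by linarith))]
    _ ≤ δ / ((1 - δ) * (2 - δ)) := by
        gcongr
        · nlinarith
        · linarith
        · linarith

theorem isProbabilityMeasure_haarMeasure_top {G : Type*} [Group G] [TopologicalSpace G]
    [IsTopologicalGroup G] [CompactSpace G] [MeasurableSpace G] [BorelSpace G] :
    IsProbabilityMeasure (Measure.haarMeasure (⊤ : TopologicalSpace.PositiveCompacts G)) :=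
  ⟨by simpa using Measure.haarMeasure_self (G := G) (K₀ := ⊤)⟩

theorem norm_integral_sub_le_of_forall_norm_sub_le {X E : Type*} [MeasurableSpace X]
    {μ : Measure X} [IsProbabilityMeasure μ] [NormedAddCommGroup E] [NormedSpace ℝ E]
    [CompleteSpace E] {f : X → E} (hf : Integrable f μ) {c : E} {r : ℝ}
    (h : ∀ x, ‖f x - c‖ ≤ r) : ‖∫ x, f x ∂μ - c‖ ≤ r := by
  have hsub : ∫ x, f x ∂μ - c = ∫ x, (f x - c) ∂μ := by
    simp [integral_sub hf (integrable_const c)]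
  simpa [hsub] using norm_integral_le_of_norm_le_const (μ := μ) (Filter.Eventually.of_forall h)

theorem ContinuousLinearMapClass.map_integral {X E F 𝓕 𝕜 : Type*} [MeasurableSpace X]
    {μ : Measure X} [RCLike 𝕜] [NormedAddCommGroup E] [NormedSpace 𝕜 E] [NormedSpace ℝ E]
    [CompleteSpace E] [NormedAddCommGroup F] [NormedSpace 𝕜 F] [NormedSpace ℝ F]
    [CompleteSpace F] [FunLike 𝓕 E F] [ContinuousLinearMapClass 𝓕 𝕜 E F] (φ : 𝓕) {f : X → E}
    (hf : Integrable f μ) : φ (∫ x, f x ∂μ) = ∫ x, φ (f x) ∂μ :=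
  ((⟨LinearMapClass.linearMap φ, map_continuous φ⟩ : E →L[𝕜] F).integral_comp_comm hf).symm

section CStarRing

variable {E : Type*} [NormedRing E] [StarRing E] [CStarRing E]

theorem CStarRing.norm_le_one_of_mem_unitary {u : E} (hu : u ∈ unitary E) : ‖u‖ ≤ 1 := by
  rcases subsingleton_or_nontrivial E with _ | _
  · simp [Subsingleton.elim u 0]
  · exact (CStarRing.norm_of_mem_unitary hu).le

theorem CStarRing.norm_mul_sub_eq_norm_sub_mul_star {u : E} (hu : u ∈ unitary E) (a b : E) :
    ‖a * u - b‖ = ‖a - b * star u‖ := by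
  rw [← CStarRing.norm_mul_mem_unitary _ (Unitary.star_mem hu), sub_mul, mul_assoc,
    Unitary.mul_star_self_of_mem hu, mul_one]

theorem CStarRing.norm_star_mul_self_sub_one_le {u x : E} (hu : u ∈ unitary E) {r : ℝ}
    (h : ‖x - u‖ ≤ r) : ‖star x * x - 1‖ ≤ r * (2 + r) := by
  have hdecomp :
      star x * x - 1 = star (x - u) * (x - u) + star u * (x - u) + star (x - u) * u := by
    rw [← Unitary.star_mul_self_of_mem hu, star_sub]
    noncomm_ring
  rw [hdecomp]
  calc _ ≤ ‖star (x - u) * (x - u)‖ + ‖star u * (x - u)‖ + ‖star (x - u) * u‖ := norm_add₃_le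
    _ = ‖x - u‖ * ‖x - u‖ + ‖x - u‖ + ‖x - u‖ := by
        rw [CStarRing.norm_star_mul_self, CStarRing.norm_mem_unitary_mul _ (Unitary.star_mem hu),
          CStarRing.norm_mul_mem_unitary _ hu, norm_star]
    _ ≤ r * (2 + r) := by nlinarith [norm_nonneg (x - u)]

theorem CStarRing.isUnit_of_norm_sub_lt_one [CompleteSpace E] {u x : E} (hu : u ∈ unitary E)
    (h : ‖x - u‖ < 1) : IsUnit x := by
  have hsmall : ‖star u * (u - x)‖ < 1 := by
    rwa [CStarRing.norm_mem_unitary_mul _ (Unitary.star_mem hu), norm_sub_rev]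
  have hx : x = u * (1 - star u * (u - x)) := by
    rw [mul_sub, mul_one, ← mul_assoc, Unitary.mul_star_self_of_mem hu, one_mul, sub_sub_cancel]
  rw [hx]
  exact (Unitary.isUnit_coe (U := ⟨u, hu⟩)).mul (Units.oneSub _ hsmall).isUnit

end CStarRing

section CStarAlgebra

variable {A B : Type*} [CStarAlgebra A] [CStarAlgebra B]

theorem abs_sub_one_le_norm_sub_one {a : A} {t : ℝ} (ht : t ∈ spectrum ℝ a) :
    |t - 1| ≤ ‖a - 1‖ := by
  rcases subsingleton_or_nontrivial A with _ | _
  · simp [spectrum.of_subsingleton] at ht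
  have h : t - 1 ∈ spectrum ℝ (a - algebraMap ℝ A 1) := by
    rw [← spectrum.sub_singleton_eq]
    exact Set.sub_mem_sub ht rfl
  simpa using spectrum.norm_le_norm_of_mem h

theorem IsUnit.spectrum_star_mul_self_pos {x : A} (hx : IsUnit x) :
    ∀ t ∈ spectrum ℝ (star x * x), 0 < t :=
  fun t ht => (spectrum_star_mul_self_nonneg t ht).lt_of_ne <| by
    rintro rfl
    exact (spectrum.zero_notMem_iff ℝ).mpr (hx.star.mul hx) ht

theorem continuousOn_inv_sqrt_spectrum {a : A} (ha : ∀ t ∈ spectrum ℝ a, 0 < t) :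
    ContinuousOn (fun t : ℝ => (√t)⁻¹) (spectrum ℝ a) :=
  Real.continuous_sqrt.continuousOn.inv₀ fun t ht => (Real.sqrt_pos.mpr (ha t ht)).ne'

theorem cfc_inv_sqrt_mul_self_mul {a : A} (ha : IsSelfAdjoint a)
    (hpos : ∀ t ∈ spectrum ℝ a, 0 < t) :
    cfc (fun t : ℝ => (√t)⁻¹) a * a * cfc (fun t : ℝ => (√t)⁻¹) a = 1 := by
  have hcont := continuousOn_inv_sqrt_spectrum hpos
  nth_rewrite 2 [← cfc_id ℝ a]
  rw [← cfc_mul .., ← cfc_mul .., ← cfc_one ℝ a]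
  refine cfc_congr fun t ht => ?_
  have := Real.mul_self_sqrt (hpos t ht).le
  have := Real.sqrt_pos.mpr (hpos t ht)
  simp only [id, Pi.one_apply]
  field_simp
  linarith

theorem norm_cfc_inv_sqrt_sub_one_le {a : A} (ha : IsSelfAdjoint a) {δ : ℝ} (hδ : δ < 1)
    (h : ‖a - 1‖ ≤ δ) : ‖cfc (fun t : ℝ => (√t)⁻¹) a - 1‖ ≤ δ / ((1 - δ) * (2 - δ)) := by
  have hspec : ∀ t ∈ spectrum ℝ a, |t - 1| ≤ δ := fun t ht =>
    (abs_sub_one_le_norm_sub_one ht).trans h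
  have hpos : ∀ t ∈ spectrum ℝ a, 0 < t := fun t ht => by
    linarith [(abs_le.mp (hspec t ht)).1]
  have hcont := continuousOn_inv_sqrt_spectrum hpos
  have hδ0 : 0 ≤ δ := (norm_nonneg _).trans h
  rw [← cfc_one ℝ a, ← cfc_sub ..]
  refine norm_cfc_le (div_nonneg hδ0 (mul_nonneg (by linarith) (by linarith))) fun t ht => ?_
  exact abs_inv_sqrt_sub_one_le hδ (hspec t ht)

/-- The unitary factor `x (x* x)^(-1/2)` of the polar decomposition of an invertible `x`
(junk otherwise). -/
noncomputable def polarUnitary (x : A) : A := x * cfc (fun t : ℝ => (√t)⁻¹) (star x * x)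

theorem polarUnitary_mem_unitary {x : A} (hx : IsUnit x) : polarUnitary x ∈ unitary A := by
  have hpos := hx.spectrum_star_mul_self_pos
  have hy : IsUnit (cfc (fun t : ℝ => (√t)⁻¹) (star x * x)) :=
    (isUnit_cfc_iff _ _ (continuousOn_inv_sqrt_spectrum hpos)).mpr fun t ht => by
      simpa using (Real.sqrt_pos.mpr (hpos t ht)).ne'
  refine (hx.mul hy).mem_unitary_of_star_mul_self ?_
  rw [star_mul, (cfc_predicate _ _ : IsSelfAdjoint (cfc _ (star x * x))).star_eq,
    ← cfc_inv_sqrt_mul_self_mul (.star_mul_self x) hpos]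
  noncomm_ring

theorem polarUnitary_unitary_mul {u : A} (hu : u ∈ unitary A) (x : A) :
    polarUnitary (u * x) = u * polarUnitary x := by
  simp only [polarUnitary]
  rw [star_mul, mul_assoc (star x), ← mul_assoc (star u), Unitary.star_mul_self_of_mem hu,
    one_mul, mul_assoc]

theorem polarUnitary_of_mem_unitary {u : A} (hu : u ∈ unitary A) : polarUnitary u = u := by
  rw [polarUnitary, Unitary.star_mul_self_of_mem hu, ← map_one (algebraMap ℝ A), cfc_algebraMap]
  simp

theorem map_polarUnitary {F : Type*} [FunLike F A B] [AlgHomClass F ℂ A B] [StarHomClass F A B]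
    (φ : F) {x : A} (hx : IsUnit x) : φ (polarUnitary x) = polarUnitary (φ x) := by
  simp only [polarUnitary]
  rw [map_mul, StarAlgHomClass.map_cfc φ _ _
    (continuousOn_inv_sqrt_spectrum hx.spectrum_star_mul_self_pos) (map_continuous φ)
    (.star_mul_self x) ((IsSelfAdjoint.star_mul_self x).map φ), map_mul, map_star]

theorem norm_polarUnitary_sub_le {u x : A} (hu : u ∈ unitary A) {r : ℝ} (hr0 : 0 ≤ r)
    (hr : r < 1 / 10) (h : ‖x - u‖ ≤ r) : ‖polarUnitary x - u‖ ≤ 2 * r / (1 - 10 * r) := by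
  have hδ : r * (2 + r) < 1 := by nlinarith
  have hy := norm_cfc_inv_sqrt_sub_one_le (.star_mul_self x) hδ
    (CStarRing.norm_star_mul_self_sub_one_le hu h)
  have hx : ‖x‖ ≤ 1 + r := calc
    ‖x‖ = ‖u + (x - u)‖ := by rw [add_sub_cancel]
    _ ≤ 1 + r := (norm_add_le _ _).trans (add_le_add (CStarRing.norm_le_one_of_mem_unitary hu) h)
  have hD : 0 < (1 - r * (2 + r)) * (2 - r * (2 + r)) := by apply mul_pos <;> nlinarith
  have h10 : 0 < 1 - 10 * r := by linarith
  calc ‖polarUnitary x - u‖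
      = ‖x * (cfc (fun t : ℝ => (√t)⁻¹) (star x * x) - 1) + (x - u)‖ := by
        rw [polarUnitary]; noncomm_ring
    _ ≤ ‖x‖ * ‖cfc (fun t : ℝ => (√t)⁻¹) (star x * x) - 1‖ + ‖x - u‖ :=
        (norm_add_le _ _).trans (add_le_add_left (norm_mul_le _ _) _)
    _ ≤ (1 + r) * (r * (2 + r) / ((1 - r * (2 + r)) * (2 - r * (2 + r)))) + r := by gcongr
    _ ≤ 2 * r / (1 - 10 * r) := by
        rw [mul_div_assoc', div_add' _ _ _ hD.ne', div_le_div_iff₀ hD h10]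
        nlinarith [mul_nonneg (mul_nonneg hr0 hr0) h10.le, pow_nonneg hr0 3, pow_nonneg hr0 4,
          pow_nonneg hr0 5]

noncomputable def cocycleAverage {G : Type*} [MeasurableSpace G] (μ : Measure G)
    (α : G → A ≃⋆ₐ[ℂ] A) (w : G → A) (v : A) : A :=
  ∫ g, w g * α g v ∂μ

theorem norm_cocycleAverage_sub_le {G : Type*} [MeasurableSpace G] {μ : Measure G}
    [IsProbabilityMeasure μ] {α : G → A ≃⋆ₐ[ℂ] A} {w : G → A} {v : A} (hv : v ∈ unitary A)
    (hint : Integrable (fun g => w g * α g v) μ) {r : ℝ}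
    (h : ∀ g, ‖v * star (α g v) - w g‖ ≤ r) : ‖cocycleAverage μ α w v - v‖ ≤ r :=
  norm_integral_sub_le_of_forall_norm_sub_le hint fun g => by
    rw [CStarRing.norm_mul_sub_eq_norm_sub_mul_star (Unitary.map_mem (α g) hv), norm_sub_rev]
    exact h g

theorem map_cocycleAverage {G : Type*} [Group G] [MeasurableSpace G] [MeasurableMul G]
    {μ : Measure G} [μ.IsMulLeftInvariant] {α : G → A ≃⋆ₐ[ℂ] A}
    (hαmul : ∀ g h a, α (g * h) a = α g (α h a)) {w : G → A} (hwU : ∀ g, w g ∈ unitary A)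
    (hcoc : ∀ g h, w (g * h) = w g * α g (w h)) {v : A}
    (hint : Integrable (fun h => w h * α h v) μ) (g : G) :
    α g (cocycleAverage μ α w v) = star (w g) * cocycleAverage μ α w v := by
  rw [cocycleAverage]
  have htranslate :
      ∀ h, α g (w h * α h v) = star (w g) * (w (g * h) * α (g * h) v) := fun h => by
    rw [hcoc, hαmul, ← mul_assoc, ← mul_assoc, Unitary.star_mul_self_of_mem (hwU g), one_mul,
      map_mul]
  calc α g (∫ h, w h * α h v ∂μ)
      = ∫ h, star (w g) * (w (g * h) * α (g * h) v) ∂μ := by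
        simp only [ContinuousLinearMapClass.map_integral (α g) hint, htranslate]
    _ = star (w g) * ∫ h, w (g * h) * α (g * h) v ∂μ :=
        integral_const_mul_of_integrable (hint.comp_mul_left g)
    _ = star (w g) * ∫ h, w h * α h v ∂μ := by
        rw [integral_mul_left_eq_self (fun h => w h * α h v) g]

theorem map_cocycleAverage_of_map_eq_coboundary {G : Type*} [MeasurableSpace G]
    {μ : Measure G} [IsProbabilityMeasure μ] {α : G → A ≃⋆ₐ[ℂ] A} {β : G → B ≃⋆ₐ[ℂ] B}
    {κ : A →⋆ₐ[ℂ] B} (hκ : ∀ g a, κ (α g a) = β g (κ a)) {w : G → A} {v : A}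
    (hv : v ∈ unitary A) (hκv : ∀ g, κ v * star (β g (κ v)) = κ (w g))
    (hint : Integrable (fun h => w h * α h v) μ) :
    κ (cocycleAverage μ α w v) = κ v := by
  have hβv : ∀ g, star (β g (κ v)) * β g (κ v) = 1 := fun g =>
    Unitary.star_mul_self_of_mem (Unitary.map_mem (β g) (Unitary.map_mem κ hv))
  rw [cocycleAverage, ContinuousLinearMapClass.map_integral (𝕜 := ℂ) κ hint]
  simp [hκ, ← hκv, mul_assoc, hβv]

end CStarAlgebra

theorem stmt10_general {G : Type*} [Group G] [TopologicalSpace G] [IsTopologicalGroup G] [CompactSpace G]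
    [MeasurableSpace G] [BorelSpace G]
    {A : Type*} [NormedRing A] [StarRing A] [CStarRing A] [CompleteSpace A]
    [NormedAlgebra ℂ A] [StarModule ℂ A]
    {B : Type*} [NormedRing B] [StarRing B] [CStarRing B] [CompleteSpace B]
    [NormedAlgebra ℂ B] [StarModule ℂ B]
    (α : G → A ≃⋆ₐ[ℂ] A) (hαmul : ∀ g h a, α (g * h) a = α g (α h a))
    (hαcont : ∀ a, Continuous fun g => α g a)
    (β : G → B ≃⋆ₐ[ℂ] B)
    (κ : A →⋆ₐ[ℂ] B) (hκ : ∀ g a, κ (α g a) = β g (κ a))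
    (w : G → A) (hwU : ∀ g, w g ∈ unitary A) (hwcont : Continuous w)
    (hcoc : ∀ g h, w (g * h) = w g * α g (w h))
    (r : ℝ) (hr0 : 0 ≤ r) (hr : r < 1 / 10)
    (v₀ : A) (hv₀ : v₀ ∈ unitary A)
    (hv₀w : ∀ g, ‖v₀ * star (α g v₀) - w g‖ ≤ r)
    (hκv₀ : ∀ g, κ v₀ * star (β g (κ v₀)) = κ (w g)) :
    ∃ v : A, v ∈ unitary A ∧ (∀ g, v * star (α g v) = w g) ∧
      ‖v - v₀‖ ≤ 2 * r / (1 - 10 * r) ∧ κ v = κ v₀ := by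
  let _ : CStarAlgebra A := ⟨⟩
  let _ : CStarAlgebra B := ⟨⟩
  have := isProbabilityMeasure_haarMeasure_top (G := G)
  set μ := Measure.haarMeasure (⊤ : TopologicalSpace.PositiveCompacts G)
  have hint : Integrable (fun g => w g * α g v₀) μ :=
    (hwcont.mul (hαcont v₀)).integrable_of_hasCompactSupport (.of_compactSpace _)
  set x := cocycleAverage μ α w v₀
  have hxv₀ : ‖x - v₀‖ ≤ r := norm_cocycleAverage_sub_le hv₀ hint hv₀w
  have hx : IsUnit x := CStarRing.isUnit_of_norm_sub_lt_one hv₀ (by linarith)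
  have hu := polarUnitary_mem_unitary hx
  refine ⟨polarUnitary x, hu, fun g => ?_, norm_polarUnitary_sub_le hv₀ hr0 hr hxv₀, ?_⟩
  · rw [map_polarUnitary (α g) hx, map_cocycleAverage hαmul hwU hcoc hint,
      polarUnitary_unitary_mul (Unitary.star_mem (hwU g)), star_mul, star_star, ← mul_assoc,
      Unitary.mul_star_self_of_mem hu, one_mul]
  · rw [map_polarUnitary κ hx, map_cocycleAverage_of_map_eq_coboundary hκ hv₀ hκv₀ hint,
      polarUnitary_of_mem_unitary (Unitary.map_mem κ hv₀)]

theorem stmt10 {G : Type*} [Group G] [TopologicalSpace G] [IsTopologicalGroup G] [CompactSpace G]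
    [MeasurableSpace G] [BorelSpace G]
    {A : Type*} [NormedRing A] [StarRing A] [CStarRing A] [CompleteSpace A]
    [NormedAlgebra ℂ A] [StarModule ℂ A]
    {B : Type*} [NormedRing B] [StarRing B] [CStarRing B] [CompleteSpace B]
    [NormedAlgebra ℂ B] [StarModule ℂ B]
    (α : G → A ≃⋆ₐ[ℂ] A) (hαmul : ∀ g h a, α (g * h) a = α g (α h a))
    (hαcont : ∀ a, Continuous fun g => α g a)
    (β : G → B ≃⋆ₐ[ℂ] B) (hβmul : ∀ g h b, β (g * h) b = β g (β h b))
    (hβcont : ∀ b, Continuous fun g => β g b)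
    (κ : A →⋆ₐ[ℂ] B) (hκ : ∀ g a, κ (α g a) = β g (κ a))
    (w : G → A) (hwU : ∀ g, w g ∈ unitary A) (hwcont : Continuous w)
    (hcoc : ∀ g h, w (g * h) = w g * α g (w h))
    (r : ℝ) (hr0 : 0 ≤ r) (hr : r < 1 / 10)
    (v₀ : A) (hv₀ : v₀ ∈ unitary A)
    (hv₀w : ∀ g, ‖v₀ * star (α g v₀) - w g‖ ≤ r)
    (hκv₀ : ∀ g, κ v₀ * star (β g (κ v₀)) = κ (w g)) :
    ∃ v : A, v ∈ unitary A ∧ (∀ g, v * star (α g v) = w g) ∧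
      ‖v - v₀‖ ≤ 2 * r / (1 - 10 * r) ∧ κ v = κ v₀ :=
  stmt10_general α hαmul hαcont β κ hκ w hwU hwcont hcoc r hr0 hr v₀ hv₀ hv₀w hκv₀
end

section
/- Let G be a topological group, d a positive integer, ρ : G → U(M_d) a unitary representation, and α^ρ the quasifree action of G on the extended Cuntz algebra E_d. Let (G, C, γ) be a unital G-C*-algebra and φ : E_d → C a unital *-homomorphism such that φ∘μ₀ is equivariant, where μ₀ : M_d ⊕ ℂ → E_d is the canonical embedding. For g ∈ G define w(g) = φ(α^ρ_g(r₁))* γ_g(φ(r₁)). Then: (1) w is a continuous map from G to the unitary group U(C); (2) φ(α^ρ_g(r_j)) w(g) = γ_g(φ(r_j)) for all j = 1,…,d; (3) w(gh) = w(g) γ_g(w(h)) for all g, h ∈ G; and (4) ‖w(g) - 1‖ = ‖φ(α^ρ_g(r₁)) - γ_g(φ(r₁))‖ for all g ∈ G. -/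
/-!
Write `s_j = φ(r_j)` and `u_g = φ(μ₀(ρ(g), 1))`, a unitary representation with
`φ(α_g(r_j)) = u_g s_j`. Equivariance of `φ ∘ μ₀` says that `γ_g` acts as `Ad u_g` on the image
of `M_d ⊕ ℂ`; in particular `γ_g(s_j s_1*) = u_g s_j s_1* u_g*` and `γ_g(u_h) = u_g u_h u_g*`.
So the isometries `t = γ_g(s_1)` and `t' = u_g s_1` have the same range projection, whence
`w_g = t'* t` is unitary, `t' w_g = t` and `‖w_g - 1‖ = ‖t' (w_g - 1)‖ = ‖t - t'‖`; likewise
`u_g s_j w_g = γ_g(s_j s_1*) γ_g(s_1) = γ_g(s_j)`. The cocycle identity follows by expanding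
`γ_{gh}(s_1) = γ_g(u_h s_1 w_h) = u_g u_h s_1 w_g γ_g(w_h)`.
-/

section Isometry

variable {R : Type*} [Monoid R] [StarMul R]

theorem mul_star_mul_eq_of_mul_star_eq {a b a' b' : R} (h : a' * star b' = a * star b)
    (hb : star b * b = 1) : a' * (star b' * b) = a := by
  rw [← mul_assoc, h, mul_assoc, hb, mul_one]

theorem star_mul_mem_unitary_of_mul_star_eq {t t' : R} (ht : star t * t = 1)
    (ht' : star t' * t' = 1) (h : t' * star t' = t * star t) : star t' * t ∈ unitary R := by
  rw [Unitary.mem_iff, star_mul, star_star]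
  constructor
  · rw [mul_assoc, mul_star_mul_eq_of_mul_star_eq h ht, ht]
  · rw [mul_assoc, mul_star_mul_eq_of_mul_star_eq h.symm ht', ht']

theorem star_mul_mul_self_eq_one {v s : R} (hv : v ∈ unitary R) (hs : star s * s = 1) :
    star (v * s) * (v * s) = 1 := by
  rw [star_mul, mul_assoc, ← mul_assoc (star v), Unitary.star_mul_self_of_mem hv, one_mul, hs]

theorem star_map_mul_map_eq_one {S F : Type*} [Monoid S] [StarMul S] [FunLike F R S]
    [StarHomClass F R S] [MonoidHomClass F R S] (f : F) {s : R} (hs : star s * s = 1) :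
    star (f s) * f s = 1 := by
  rw [← map_star, ← map_mul, hs, map_one]

end Isometry

section CStarRing

variable {E : Type*} [NormedRing E] [StarRing E] [CStarRing E]

theorem CStarRing.norm_mul_of_star_mul_self_eq_one {V : E} (hV : star V * V = 1) (A : E) :
    ‖V * A‖ = ‖A‖ := by
  rw [← sq_eq_sq₀ (norm_nonneg _) (norm_nonneg _), sq, sq, ← CStarRing.norm_star_mul_self,
    ← CStarRing.norm_star_mul_self, star_mul, mul_assoc, ← mul_assoc (star V), hV, one_mul]

theorem norm_star_mul_sub_one_of_mul_star_eq {t t' : E} (ht : star t * t = 1)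
    (ht' : star t' * t' = 1) (h : t' * star t' = t * star t) :
    ‖star t' * t - 1‖ = ‖t' - t‖ := by
  rw [← CStarRing.norm_mul_of_star_mul_self_eq_one ht', mul_sub, mul_one,
    mul_star_mul_eq_of_mul_star_eq h ht, norm_sub_rev]

end CStarRing

structure IsToeplitzCuntzFamily {E ι : Type*} [Mul E] [Star E] [One E] [Zero E] (r : ι → E) :
    Prop where
  star_mul_self : ∀ j, star (r j) * r j = 1
  rangeProj_mul_rangeProj : ∀ j k, j ≠ k → (r j * star (r j)) * (r k * star (r k)) = 0

section ToeplitzCuntz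

variable {E ι : Type*} [Ring E] [StarRing E] {r : ι → E}

theorem IsToeplitzCuntzFamily.star_mul_of_ne (hr : IsToeplitzCuntzFamily r) {j k : ι}
    (h : j ≠ k) : star (r j) * r k = 0 :=
  calc star (r j) * r k = (star (r j) * r j) * (star (r j) * r k) * (star (r k) * r k) := by
        rw [hr.star_mul_self, hr.star_mul_self, one_mul, mul_one]
    _ = star (r j) * ((r j * star (r j)) * (r k * star (r k))) * r k := by
        simp only [mul_assoc]
    _ = 0 := by rw [hr.rangeProj_mul_rangeProj j k h, mul_zero, zero_mul]

variable [Algebra ℂ E] [Fintype ι]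

variable (r) in
def matrixUnitsMap : Matrix ι ι ℂ →ₗ[ℂ] E where
  toFun x := ∑ j, ∑ k, x j k • (r j * star (r k))
  map_add' x y := by simp only [Matrix.add_apply, add_smul, Finset.sum_add_distrib]
  map_smul' c x := by
    simp only [Matrix.smul_apply, smul_eq_mul, mul_smul, Finset.smul_sum, RingHom.id_apply]

theorem star_matrixUnitsMap [StarModule ℂ E] (x : Matrix ι ι ℂ) :
    star (matrixUnitsMap r x) = matrixUnitsMap r (star x) := by
  simp only [matrixUnitsMap, LinearMap.coe_mk, AddHom.coe_mk, star_sum, star_smul, star_mul,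
    star_star, Matrix.star_apply]
  exact Finset.sum_comm

variable [DecidableEq ι]

theorem matrixUnitsMap_single (j k : ι) :
    matrixUnitsMap r (Matrix.single j k 1) = r j * star (r k) := by
  simp [matrixUnitsMap, Matrix.single_apply, ite_smul, ite_and]

theorem matrixUnitsMap_one : matrixUnitsMap r 1 = ∑ j, r j * star (r j) := by
  simp [matrixUnitsMap, Matrix.one_apply, ite_smul]

theorem IsToeplitzCuntzFamily.matrixUnitsMap_mul (hr : IsToeplitzCuntzFamily r)
    (x y : Matrix ι ι ℂ) :
    matrixUnitsMap r (x * y) = matrixUnitsMap r x * matrixUnitsMap r y := by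
  let A := matrixUnitsMap r
  have key : (LinearMap.mul ℂ _).compr₂ A = (LinearMap.mul ℂ E).compl₁₂ A A := by
    refine LinearMap.ext_basis (Matrix.stdBasis ℂ ι ι) (Matrix.stdBasis ℂ ι ι) ?_
    rintro ⟨i, j⟩ ⟨k, l⟩
    simp only [Matrix.stdBasis_eq_single, LinearMap.compr₂_apply, LinearMap.compl₁₂_apply,
      LinearMap.mul_apply', A, matrixUnitsMap_single]
    rcases eq_or_ne j k with rfl | hjk
    · rw [Matrix.single_mul_single_same, one_mul, matrixUnitsMap_single, mul_assoc,
        ← mul_assoc (star (r j)), hr.star_mul_self, one_mul]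
    · rw [Matrix.single_mul_single_of_ne _ _ _ _ hjk, map_zero, mul_assoc,
        ← mul_assoc (star (r j)), hr.star_mul_of_ne hjk, zero_mul, mul_zero]
  exact LinearMap.congr_fun₂ key x y

theorem IsToeplitzCuntzFamily.matrixUnitsMap_mul_sub_one (hr : IsToeplitzCuntzFamily r)
    (x : Matrix ι ι ℂ) : matrixUnitsMap r x * (1 - matrixUnitsMap r 1) = 0 := by
  rw [mul_sub, mul_one, ← hr.matrixUnitsMap_mul, mul_one, sub_self]

theorem IsToeplitzCuntzFamily.one_sub_mul_matrixUnitsMap (hr : IsToeplitzCuntzFamily r)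
    (x : Matrix ι ι ℂ) : (1 - matrixUnitsMap r 1) * matrixUnitsMap r x = 0 := by
  rw [sub_mul, one_mul, ← hr.matrixUnitsMap_mul, one_mul, sub_self]

end ToeplitzCuntz

namespace IsToeplitzCuntzFamily

variable {E ι : Type*} [Ring E] [StarRing E] [Algebra ℂ E] [StarModule ℂ E]
  [Fintype ι] [DecidableEq ι] {r : ι → E}

def canonicalHom (hr : IsToeplitzCuntzFamily r) : Matrix ι ι ℂ × ℂ →⋆ₐ[ℂ] E :=
  { AlgHom.ofLinearMap (matrixUnitsMap r ∘ₗ LinearMap.fst ℂ (Matrix ι ι ℂ) ℂ +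
      (LinearMap.snd ℂ (Matrix ι ι ℂ) ℂ).smulRight (1 - matrixUnitsMap r 1))
      (by simp) (by
        rintro ⟨x, l⟩ ⟨y, m⟩
        have hQQ :
            (1 - matrixUnitsMap r 1) * (1 - matrixUnitsMap r 1) = 1 - matrixUnitsMap r 1 := by
          rw [sub_mul, one_mul, hr.matrixUnitsMap_mul_sub_one, sub_zero]
        simp [add_mul, mul_add, hr.matrixUnitsMap_mul_sub_one, hr.one_sub_mul_matrixUnitsMap, hQQ,
          hr.matrixUnitsMap_mul, smul_smul, mul_comm]) with
    map_star' := by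
      rintro ⟨x, l⟩
      simp [star_matrixUnitsMap] }

theorem canonicalHom_apply (hr : IsToeplitzCuntzFamily r) (x : Matrix ι ι ℂ) (l : ℂ) :
    hr.canonicalHom (x, l) =
      ∑ j, ∑ k, x j k • (r j * star (r k)) + l • (1 - ∑ j, r j * star (r j)) := by
  rw [← matrixUnitsMap_one]; rfl

theorem canonicalHom_single (hr : IsToeplitzCuntzFamily r) (j k : ι) :
    hr.canonicalHom (Matrix.single j k 1, 0) = r j * star (r k) := by
  rw [canonicalHom_apply, zero_smul, add_zero]; exact matrixUnitsMap_single j k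

end IsToeplitzCuntzFamily

section Cocycle

variable {G C : Type*} [Ring C] [StarRing C] [Algebra ℂ C]
  {γ : G → C ≃⋆ₐ[ℂ] C} {u : G → C} {s : C}

variable (γ u s) in
def intertwiningCocycle (g : G) : C := star (u g * s) * γ g s

theorem mul_mul_star_mul_eq_map_mul_star_map {g : G} {a : C}
    (ha : γ g (a * star s) = u g * (a * star s) * star (u g)) :
    u g * a * star (u g * s) = γ g a * star (γ g s) := by
  rw [← map_star, ← map_mul, ha, star_mul]
  simp only [mul_assoc]

theorem mul_mul_intertwiningCocycle {g : G} {a : C} (hs : star s * s = 1)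
    (ha : γ g (a * star s) = u g * (a * star s) * star (u g)) :
    u g * a * intertwiningCocycle γ u s g = γ g a :=
  mul_star_mul_eq_of_mul_star_eq (mul_mul_star_mul_eq_map_mul_star_map ha)
    (star_map_mul_map_eq_one (γ g) hs)

theorem intertwiningCocycle_mem_unitary {g : G} (hu : u g ∈ unitary C) (hs : star s * s = 1)
    (hss : γ g (s * star s) = u g * (s * star s) * star (u g)) :
    intertwiningCocycle γ u s g ∈ unitary C :=
  star_mul_mem_unitary_of_mul_star_eq (star_map_mul_map_eq_one (γ g) hs)
    (star_mul_mul_self_eq_one hu hs)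
    (mul_mul_star_mul_eq_map_mul_star_map hss)

theorem intertwiningCocycle_mul [Group G] (hγmul : ∀ g h c, γ (g * h) c = γ g (γ h c))
    (hu : ∀ g, u g ∈ unitary C) (humul : ∀ g h, u (g * h) = u g * u h)
    (hγu : ∀ g h, γ g (u h) = u g * u h * star (u g)) (hs : star s * s = 1)
    (hss : ∀ g, γ g (s * star s) = u g * (s * star s) * star (u g)) (g h : G) :
    intertwiningCocycle γ u s (g * h) =
      intertwiningCocycle γ u s g * γ g (intertwiningCocycle γ u s h) := by
  set w := intertwiningCocycle γ u s
  have hγs : ∀ g, γ g s = u g * s * w g := fun g =>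
    (mul_mul_intertwiningCocycle hs (hss g)).symm
  have hV : star (u g * u h * s) * (u g * u h * s) = 1 := by
    rw [mul_assoc]
    exact star_mul_mul_self_eq_one (hu g) (star_mul_mul_self_eq_one (hu h) hs)
  calc w (g * h) = star (u g * u h * s) * γ g (γ h s) := by
        show star (u (g * h) * s) * γ (g * h) s = _
        rw [humul, hγmul]
    _ = star (u g * u h * s) * (u g * u h * (star (u g) * u g) * s * w g * γ g (w h)) := by
        rw [hγs h, map_mul, map_mul, hγu, hγs g]
        simp only [mul_assoc]
    _ = w g * γ g (w h) := by
        rw [Unitary.star_mul_self_of_mem (hu g), mul_one, mul_assoc _ (w g), ← mul_assoc, hV,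
          one_mul]

theorem continuous_intertwiningCocycle [TopologicalSpace G] [TopologicalSpace C]
    [IsTopologicalRing C] [ContinuousStar C] (hu : Continuous u)
    (hγ : Continuous fun g => γ g s) : Continuous (intertwiningCocycle γ u s) :=
  ((hu.mul continuous_const).star).mul hγ

end Cocycle

theorem norm_intertwiningCocycle_sub_one {G C : Type*} [NormedRing C] [StarRing C] [CStarRing C]
    [Algebra ℂ C] {γ : G → C ≃⋆ₐ[ℂ] C} {u : G → C} {s : C} {g : G}
    (hu : u g ∈ unitary C) (hs : star s * s = 1)
    (hss : γ g (s * star s) = u g * (s * star s) * star (u g)) :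
    ‖intertwiningCocycle γ u s g - 1‖ = ‖u g * s - γ g s‖ :=
  norm_star_mul_sub_one_of_mul_star_eq (star_map_mul_map_eq_one (γ g) hs)
    (star_mul_mul_self_eq_one hu hs)
    (mul_mul_star_mul_eq_map_mul_star_map hss)

theorem Prod.mk_mem_unitary {A B : Type*} [Monoid A] [StarMul A] [Monoid B] [StarMul B] {a : A}
    {b : B} (ha : a ∈ unitary A) (hb : b ∈ unitary B) : (a, b) ∈ unitary (A × B) := by
  rw [Unitary.mem_iff] at ha hb ⊢
  exact ⟨Prod.ext ha.1 hb.1, Prod.ext ha.2 hb.2⟩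

theorem map_eq_conj_of_equivariant {G C ι : Type*} [Fintype ι] [DecidableEq ι] [Ring C]
    [StarRing C] [Algebra ℂ C] {γ : G → C ≃⋆ₐ[ℂ] C} {ρ : G → Matrix ι ι ℂ}
    {T : Matrix ι ι ℂ × ℂ →⋆ₐ[ℂ] C}
    (hT : ∀ g x l, γ g (T (x, l)) = T (ρ g * x * star (ρ g), l)) (g : G)
    (z : Matrix ι ι ℂ × ℂ) : γ g (T z) = T (ρ g, 1) * T z * star (T (ρ g, 1)) := by
  obtain ⟨x, l⟩ := z
  rw [hT, ← map_star, ← map_mul, ← map_mul]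
  congr 1
  ext <;> simp

theorem stmt13_general {G : Type*} [Group G] [TopologicalSpace G]
    (d : ℕ) (hd : 0 < d)
    {E : Type*} [NormedRing E] [StarRing E] [NormedAlgebra ℂ E] [StarModule ℂ E]
    (r : Fin d → E)
    (hiso : ∀ j, star (r j) * r j = 1)
    (horth : ∀ j k, j ≠ k → (r j * star (r j)) * (r k * star (r k)) = 0)
    {C : Type*} [NormedRing C] [StarRing C] [CStarRing C] [NormedAlgebra ℂ C]
    (γ : G → C ≃⋆ₐ[ℂ] C) (hγmul : ∀ g h c, γ (g * h) c = γ g (γ h c))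
    (hγcont : ∀ c, Continuous fun g => γ g c)
    (ρ : G → Matrix (Fin d) (Fin d) ℂ)
    (hρU : ∀ g, ρ g ∈ unitary (Matrix (Fin d) (Fin d) ℂ))
    (hρmul : ∀ g h, ρ (g * h) = ρ g * ρ h)
    (hρcont : Continuous ρ)
    (μ₀ : Matrix (Fin d) (Fin d) ℂ → ℂ → E)
    (hμ₀def : ∀ x l, μ₀ x l =
      (∑ j, ∑ k, x j k • (r j * star (r k))) + l • (1 - ∑ j, r j * star (r j)))
    (α : G → E ≃⋆ₐ[ℂ] E) (hαdef : ∀ g j, α g (r j) = μ₀ (ρ g) 1 * r j)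
    (φ : E →⋆ₐ[ℂ] C)
    (hequiv : ∀ g x l, γ g (φ (μ₀ x l)) = φ (μ₀ (ρ g * x * star (ρ g)) l))
    (w : G → C)
    (hwdef : ∀ g, w g = star (φ (α g (r ⟨0, hd⟩))) * γ g (φ (r ⟨0, hd⟩))) :
    (∀ g, w g ∈ unitary C) ∧ Continuous w ∧
      (∀ g j, φ (α g (r j)) * w g = γ g (φ (r j))) ∧
      (∀ g h, w (g * h) = w g * γ g (w h)) ∧
      (∀ g, ‖w g - 1‖ = ‖φ (α g (r ⟨0, hd⟩)) - γ g (φ (r ⟨0, hd⟩))‖) := by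
  have hr : IsToeplitzCuntzFamily r := ⟨hiso, horth⟩
  have hμ₀ : ∀ x l, μ₀ x l = hr.canonicalHom (x, l) := fun x l => by
    rw [hμ₀def, hr.canonicalHom_apply]
  obtain ⟨T, hT⟩ : ∃ T : Matrix (Fin d) (Fin d) ℂ × ℂ →⋆ₐ[ℂ] C,
      ∀ z, φ (hr.canonicalHom z) = T z := ⟨φ.comp hr.canonicalHom, fun _ => rfl⟩
  have hconj := map_eq_conj_of_equivariant fun g x l => by
    simpa only [hμ₀, hT] using hequiv g x l
  have hα : ∀ g j, φ (α g (r j)) = T (ρ g, 1) * φ (r j) := fun g j => by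
    rw [hαdef, hμ₀, map_mul, hT]
  have hw : w = intertwiningCocycle γ (fun g => T (ρ g, 1)) (φ (r ⟨0, hd⟩)) :=
    funext fun g => by rw [hwdef, hα]; rfl
  subst hw
  have hu : ∀ g, T (ρ g, 1) ∈ unitary C := fun g =>
    Unitary.map_mem T (Prod.mk_mem_unitary (hρU g) (one_mem _))
  have hs := star_map_mul_map_eq_one φ (hiso ⟨0, hd⟩)
  have hrange : ∀ g j, γ g (φ (r j) * star (φ (r ⟨0, hd⟩))) =
      T (ρ g, 1) * (φ (r j) * star (φ (r ⟨0, hd⟩))) * star (T (ρ g, 1)) := fun g j => by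
    simpa only [← hT, hr.canonicalHom_single, map_mul, map_star]
      using hconj g (Matrix.single j ⟨0, hd⟩ 1, 0)
  refine ⟨fun g => intertwiningCocycle_mem_unitary (hu g) hs (hrange g _),
    continuous_intertwiningCocycle ?_ (hγcont _),
    fun g j => by
      rw [hα]; exact mul_mul_intertwiningCocycle (u := fun g => T (ρ g, 1)) hs (hrange g j),
    intertwiningCocycle_mul hγmul hu
      (fun g h => by rw [hρmul, ← map_mul, Prod.mk_mul_mk, mul_one])
      (fun g h => hconj g _) hs (fun g => hrange g _),
    fun g => by rw [hα]; exact norm_intertwiningCocycle_sub_one (hu g) hs (hrange g _)⟩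
  exact T.toLinearMap.continuous_of_finiteDimensional.comp (hρcont.prodMk continuous_const)

/-- Lemma 3.7(1)-(4) of the paper, on the cocycle `w(g) = φ(α^ρ_g(r₁))* γ_g(φ(r₁))`
associated to a unital homomorphism `φ : E_d → C` such that `φ∘μ₀` is equivariant.
Here `E_d` is axiomatized as a unital C*-algebra `E` with isometries `r j` having mutually
orthogonal range projections, `μ₀ : M_d ⊕ ℂ → E` is the canonical embedding (given by the
explicit formula `hμ₀def`), `α` is the quasifree action determined by
`α_g(r_j) = μ₀(ρ(g),1) r_j`, and the equivariance of `φ∘μ₀` is expressed via the action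
`Ad(ρ ⊕ 1)` on `M_d ⊕ ℂ`. -/
theorem stmt13 {G : Type*} [Group G] [TopologicalSpace G] [IsTopologicalGroup G]
    (d : ℕ) (hd : 0 < d)
    {E : Type*} [NormedRing E] [StarRing E] [CStarRing E] [CompleteSpace E]
    [NormedAlgebra ℂ E] [StarModule ℂ E]
    (r : Fin d → E)
    (hiso : ∀ j, star (r j) * r j = 1)
    (horth : ∀ j k, j ≠ k → (r j * star (r j)) * (r k * star (r k)) = 0)
    {C : Type*} [NormedRing C] [StarRing C] [CStarRing C] [CompleteSpace C]
    [NormedAlgebra ℂ C] [StarModule ℂ C]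
    (γ : G → C ≃⋆ₐ[ℂ] C) (hγmul : ∀ g h c, γ (g * h) c = γ g (γ h c))
    (hγcont : ∀ c, Continuous fun g => γ g c)
    (ρ : G → Matrix (Fin d) (Fin d) ℂ)
    (hρU : ∀ g, ρ g ∈ unitary (Matrix (Fin d) (Fin d) ℂ))
    (hρ1 : ρ 1 = 1) (hρmul : ∀ g h, ρ (g * h) = ρ g * ρ h)
    (hρcont : Continuous ρ)
    (μ₀ : Matrix (Fin d) (Fin d) ℂ → ℂ → E)
    (hμ₀def : ∀ x l, μ₀ x l =
      (∑ j, ∑ k, x j k • (r j * star (r k))) + l • (1 - ∑ j, r j * star (r j)))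
    (α : G → E ≃⋆ₐ[ℂ] E) (hαmul : ∀ g h a, α (g * h) a = α g (α h a))
    (hαdef : ∀ g j, α g (r j) = μ₀ (ρ g) 1 * r j)
    (φ : E →⋆ₐ[ℂ] C)
    (hequiv : ∀ g x l, γ g (φ (μ₀ x l)) = φ (μ₀ (ρ g * x * star (ρ g)) l))
    (w : G → C)
    (hwdef : ∀ g, w g = star (φ (α g (r ⟨0, hd⟩))) * γ g (φ (r ⟨0, hd⟩))) :
    (∀ g, w g ∈ unitary C) ∧ Continuous w ∧
      (∀ g j, φ (α g (r j)) * w g = γ g (φ (r j))) ∧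
      (∀ g h, w (g * h) = w g * γ g (w h)) ∧
      (∀ g, ‖w g - 1‖ = ‖φ (α g (r ⟨0, hd⟩)) - γ g (φ (r ⟨0, hd⟩))‖) :=
  stmt13_general d hd r hiso horth γ hγmul hγcont ρ hρU hρmul hρcont μ₀ hμ₀def α hαdef φ hequiv w
    hwdef
end

section
/- With the setup of the cocycle w(g) = φ(α^ρ_g(r₁))* γ_g(φ(r₁)) for a unital homomorphism φ : E_d → C with φ∘μ₀ equivariant: if v ∈ U(C) satisfies v γ_g(v)* = w(g) for all g ∈ G, then there is a unique unital *-homomorphism ψ : E_d → C with ψ(r_j) = φ(r_j) v for j = 1,…,d; moreover ψ is equivariant (ψ∘α^ρ_g = γ_g∘ψ) and ψ∘μ₀ = φ∘μ₀. -/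
/-!
If `ψ(r_j) = φ(r_j) v` with `v` unitary, then `ψ(r_j r_k^*) = φ(r_j r_k^*)`, so `ψ` and `φ` agree
on the image of `μ₀`; existence and uniqueness of `ψ` come from the universal property, since the
`φ(r_j) v` again satisfy the Cuntz–Toeplitz relations. For equivariance, the coboundary equation
gives `γ_g(v) = w(g)^* v`, while equivariance of `φ ∘ μ₀` applied to the matrix unit `e_{j1}`
computes `γ_g(φ(r_j)) γ_g(φ(r_1))^*`; multiplying out yields `γ_g(φ(r_j) v) = φ(α_g(r_j)) v`.
Hence `ψ ∘ α_g` and `γ_g ∘ ψ` agree on the generators and coincide by uniqueness.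
-/

structure IsCuntzToeplitzFamily {ι A : Type*} [MonoidWithZero A] [Star A] (t : ι → A) :
    Prop where
  isometry : ∀ j, star (t j) * t j = 1
  orthogonal : ∀ j k, j ≠ k → t j * star (t j) * (t k * star (t k)) = 0

namespace IsCuntzToeplitzFamily

variable {ι A B F : Type*} [MonoidWithZero A] [StarMul A] {t : ι → A}

theorem star_mul_of_ne (ht : IsCuntzToeplitzFamily t) {j k : ι} (hjk : j ≠ k) :
    star (t j) * t k = 0 :=
  calc star (t j) * t k = star (t j) * (t j * star (t j) * (t k * star (t k))) * t k := by
        simp only [mul_assoc, ht.isometry, mul_one]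
        rw [← mul_assoc (star (t j)), ht.isometry, one_mul]
    _ = 0 := by rw [ht.orthogonal j k hjk, mul_zero, zero_mul]

theorem mul_star_mul (ht : IsCuntzToeplitzFamily t) (j k m : ι) [Decidable (k = m)] :
    t j * star (t k) * t m = if k = m then t j else 0 := by
  split_ifs with hkm
  · rw [hkm, mul_assoc, ht.isometry, mul_one]
  · rw [mul_assoc, ht.star_mul_of_ne hkm, mul_zero]

theorem mul_unitary (ht : IsCuntzToeplitzFamily t) {u : A} (hu : u ∈ unitary A) :
    IsCuntzToeplitzFamily fun j => t j * u := by
  have hproj : ∀ j, t j * u * star (t j * u) = t j * star (t j) := fun j => by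
    rw [star_mul, mul_assoc, ← mul_assoc u, Unitary.mul_star_self_of_mem hu, one_mul]
  refine ⟨fun j => ?_, fun j k hjk => ?_⟩
  · rw [star_mul, mul_assoc, ← mul_assoc (star (t j)), ht.isometry, one_mul,
      Unitary.star_mul_self_of_mem hu]
  · rw [hproj, hproj, ht.orthogonal j k hjk]

theorem map [MonoidWithZero B] [StarMul B] [FunLike F A B] [MonoidWithZeroHomClass F A B]
    [StarHomClass F A B] (ht : IsCuntzToeplitzFamily t) (f : F) :
    IsCuntzToeplitzFamily fun j => f (t j) := by
  refine ⟨fun j => ?_, fun j k hjk => ?_⟩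
  · rw [← map_star, ← map_mul, ht.isometry, map_one]
  · rw [← map_star, ← map_star, ← map_mul, ← map_mul, ← map_mul, ht.orthogonal j k hjk,
      map_zero]

end IsCuntzToeplitzFamily

section MatrixEmbedding

variable {ι R A B : Type*} [Fintype ι] [CommSemiring R] [Ring A] [StarRing A] [Algebra R A]
  {t : ι → A}

/-- The paper's `μ₀ : M_d ⊕ ℂ → E_d`: matrix units go to `r_j r_k^*`, the scalar summand to the
complement of the range projections. -/
def matrixEmbedding (t : ι → A) (x : Matrix ι ι R) (l : R) : A :=
  (∑ j, ∑ k, x j k • (t j * star (t k))) + l • (1 - ∑ j, t j * star (t j))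

theorem map_matrixEmbedding [Ring B] [StarRing B] [Algebra R B] (f : A →⋆ₐ[R] B)
    (x : Matrix ι ι R) (l : R) :
    f (matrixEmbedding t x l) = matrixEmbedding (fun j => f (t j)) x l := by
  simp only [matrixEmbedding, map_add, map_smul, map_sum, map_sub, map_one, map_mul, map_star]

theorem matrixEmbedding_mul_unitary {u : A} (hu : u ∈ unitary A) (x : Matrix ι ι R) (l : R) :
    matrixEmbedding (fun j => t j * u) x l = matrixEmbedding t x l := by
  have h : ∀ j k, t j * u * star (t k * u) = t j * star (t k) := fun j k => by
    rw [star_mul, mul_assoc, ← mul_assoc u, Unitary.mul_star_self_of_mem hu, one_mul]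
  simp only [matrixEmbedding, h]

theorem matrixEmbedding_single [DecidableEq ι] (j k : ι) :
    matrixEmbedding t (Matrix.single j k (1 : R)) 0 = t j * star (t k) := by
  simp [matrixEmbedding, Matrix.single_apply, ite_and]

theorem matrixEmbedding_mul_apply (ht : IsCuntzToeplitzFamily t) (x : Matrix ι ι R) (l : R)
    (m : ι) : matrixEmbedding t x l * t m = ∑ a, x a m • t a := by
  classical
  simp [matrixEmbedding, add_mul, sub_mul, Finset.sum_mul, ht.mul_star_mul]

theorem matrixEmbedding_mul_sum_smul (ht : IsCuntzToeplitzFamily t) (x : Matrix ι ι R) (l : R)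
    (c : ι → R) : matrixEmbedding t x l * ∑ b, c b • t b = ∑ a, x.mulVec c a • t a := by
  simp only [Finset.mul_sum, mul_smul_comm, matrixEmbedding_mul_apply ht, Finset.smul_sum,
    smul_smul, Matrix.mulVec, dotProduct, Finset.sum_smul]
  rw [Finset.sum_comm]
  simp only [mul_comm]

theorem matrixEmbedding_conj_single_mul [StarRing R] [DecidableEq ι]
    (ht : IsCuntzToeplitzFamily t) {u : Matrix ι ι R} (hu : star u * u = 1) (i j : ι)
    (l l' : R) :
    matrixEmbedding t (u * Matrix.single j i 1 * star u) l * (matrixEmbedding t u l' * t i) =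
      matrixEmbedding t u l' * t j := by
  have hconj : u * Matrix.single j i 1 * star u * u = u * Matrix.single j i 1 := by
    rw [mul_assoc _ (star u), hu, mul_one]
  rw [matrixEmbedding_mul_apply ht u l' i, matrixEmbedding_mul_sum_smul ht,
    matrixEmbedding_mul_apply ht]
  have hcol : ∀ M : Matrix ι ι R, M.mulVec (fun b => u b i) = fun a => (M * u) a i :=
    fun _ => rfl
  simp only [hcol, hconj, Matrix.mul_single_apply_same, mul_one]

end MatrixEmbedding

section Coboundary

variable {ι R E C F : Type*} [Fintype ι] [DecidableEq ι] [CommSemiring R] [StarRing R]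
  [Ring E] [StarRing E] [Algebra R E] [Ring C] [StarRing C] [Algebra R C]

theorem map_mul_eq_of_coboundary {t : ι → E} (ht : IsCuntzToeplitzFamily t) (φ : E →⋆ₐ[R] C)
    [FunLike F C C] [MulHomClass F C C] [StarHomClass F C C] (β : F) {u : Matrix ι ι R}
    (hu : star u * u = 1)
    (hβ : ∀ x l, β (φ (matrixEmbedding t x l)) = φ (matrixEmbedding t (u * x * star u) l))
    {v : C} (hv : v ∈ unitary C) (i : ι)
    (hvw : v * star (β v) = star (φ (matrixEmbedding t u 1 * t i)) * β (φ (t i))) (j : ι) :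
    β (φ (t j) * v) = φ (matrixEmbedding t u 1 * t j) * v := by
  have hβv : β v = star (v * star (β v)) * v := by
    rw [star_mul, star_star, mul_assoc, Unitary.star_mul_self_of_mem hv, mul_one]
  calc β (φ (t j) * v)
      = β (φ (t j * star (t i))) * (φ (matrixEmbedding t u 1 * t i) * v) := by
        rw [map_mul β, hβv, hvw, star_mul, star_star, map_mul φ (t j), map_star φ, map_mul β,
          map_star β]
        simp only [mul_assoc]
    _ = φ (matrixEmbedding t u 1 * t j) * v := by
        rw [← matrixEmbedding_single (R := R), hβ, ← mul_assoc, ← map_mul,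
          matrixEmbedding_conj_single_mul ht hu]

end Coboundary

theorem stmt14_general {G : Type*} (d : ℕ) (hd : 0 < d)
    {E : Type u} [NormedRing E] [StarRing E] [NormedAlgebra ℂ E]
    (r : Fin d → E)
    (hiso : ∀ j, star (r j) * r j = 1)
    (horth : ∀ j k, j ≠ k → (r j * star (r j)) * (r k * star (r k)) = 0)
    (huniv : ∀ (D : Type u) [NormedRing D] [StarRing D] [CStarRing D] [CompleteSpace D]
      [NormedAlgebra ℂ D] [StarModule ℂ D] (t : Fin d → D),
      (∀ j, star (t j) * t j = 1) →
      (∀ j k, j ≠ k → (t j * star (t j)) * (t k * star (t k)) = 0) →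
      ∃! ψ : E →⋆ₐ[ℂ] D, ∀ j, ψ (r j) = t j)
    {C : Type u} [NormedRing C] [StarRing C] [CStarRing C] [CompleteSpace C]
    [NormedAlgebra ℂ C] [StarModule ℂ C]
    (γ : G → C ≃⋆ₐ[ℂ] C)
    (ρ : G → Matrix (Fin d) (Fin d) ℂ)
    (hρU : ∀ g, ρ g ∈ unitary (Matrix (Fin d) (Fin d) ℂ))
    (μ₀ : Matrix (Fin d) (Fin d) ℂ → ℂ → E)
    (hμ₀def : ∀ x l, μ₀ x l =
      (∑ j, ∑ k, x j k • (r j * star (r k))) + l • (1 - ∑ j, r j * star (r j)))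
    (α : G → E ≃⋆ₐ[ℂ] E)
    (hαdef : ∀ g j, α g (r j) = μ₀ (ρ g) 1 * r j)
    (φ : E →⋆ₐ[ℂ] C)
    (hequiv : ∀ g x l, γ g (φ (μ₀ x l)) = φ (μ₀ (ρ g * x * star (ρ g)) l))
    (w : G → C)
    (hwdef : ∀ g, w g = star (φ (α g (r ⟨0, hd⟩))) * γ g (φ (r ⟨0, hd⟩)))
    (v : C) (hv : v ∈ unitary C)
    (hvw : ∀ g, v * star (γ g v) = w g) :
    (∃! ψ : E →⋆ₐ[ℂ] C, ∀ j, ψ (r j) = φ (r j) * v) ∧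
      ∀ ψ : E →⋆ₐ[ℂ] C, (∀ j, ψ (r j) = φ (r j) * v) →
        (∀ g a, ψ (α g a) = γ g (ψ a)) ∧ (∀ x l, ψ (μ₀ x l) = φ (μ₀ x l)) := by
  obtain rfl : μ₀ = matrixEmbedding r := funext₂ hμ₀def
  have hr : IsCuntzToeplitzFamily r := ⟨hiso, horth⟩
  have hext : ∀ ψ₁ ψ₂ : E →⋆ₐ[ℂ] C, (∀ j, ψ₁ (r j) = ψ₂ (r j)) → ψ₁ = ψ₂ := fun ψ₁ ψ₂ h =>
    (huniv C _ (hr.map ψ₁).isometry (hr.map ψ₁).orthogonal).unique (fun _ => rfl)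
      fun j => (h j).symm
  have hφv := (hr.map φ).mul_unitary hv
  refine ⟨huniv C _ hφv.isometry hφv.orthogonal, fun ψ hψ => ?_⟩
  have hψμ₀ : ∀ x l, ψ (matrixEmbedding r x l) = φ (matrixEmbedding r x l) := fun x l => by
    rw [map_matrixEmbedding, map_matrixEmbedding, funext hψ, matrixEmbedding_mul_unitary hv]
  refine ⟨fun g => DFunLike.congr_fun (hext (ψ.comp (α g)) ((γ g : C →⋆ₐ[ℂ] C).comp ψ)
    fun j => ?_), hψμ₀⟩
  have hcocycle := map_mul_eq_of_coboundary hr φ (γ g) (Unitary.star_mul_self_of_mem (hρU g))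
    (hequiv g) hv ⟨0, hd⟩ (by rw [hvw, hwdef, hαdef]) j
  calc ψ (α g (r j)) = φ (matrixEmbedding r (ρ g) 1 * r j) * v := by
        rw [hαdef, map_mul, hψμ₀, hψ, map_mul, mul_assoc]
    _ = γ g (ψ (r j)) := by rw [hψ, hcocycle]

/-- Lemma 3.7(5) of the paper: with `w(g) = φ(α^ρ_g(r₁))* γ_g(φ(r₁))` as before, if
`v ∈ U(C)` satisfies `v γ_g(v)* = w(g)` for all `g`, then there is a unique unital
*-homomorphism `ψ : E_d → C` with `ψ(r_j) = φ(r_j) v`; moreover `ψ` is equivariant and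
`ψ∘μ₀ = φ∘μ₀`.  `E_d` is axiomatized by its generators, relations and universal property. -/
theorem stmt14 {G : Type*} [Group G] [TopologicalSpace G] [IsTopologicalGroup G]
    (d : ℕ) (hd : 0 < d)
    {E : Type u} [NormedRing E] [StarRing E] [CStarRing E] [CompleteSpace E]
    [NormedAlgebra ℂ E] [StarModule ℂ E]
    (r : Fin d → E)
    (hiso : ∀ j, star (r j) * r j = 1)
    (horth : ∀ j k, j ≠ k → (r j * star (r j)) * (r k * star (r k)) = 0)
    (huniv : ∀ (D : Type u) [NormedRing D] [StarRing D] [CStarRing D] [CompleteSpace D]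
      [NormedAlgebra ℂ D] [StarModule ℂ D] (t : Fin d → D),
      (∀ j, star (t j) * t j = 1) →
      (∀ j k, j ≠ k → (t j * star (t j)) * (t k * star (t k)) = 0) →
      ∃! ψ : E →⋆ₐ[ℂ] D, ∀ j, ψ (r j) = t j)
    {C : Type u} [NormedRing C] [StarRing C] [CStarRing C] [CompleteSpace C]
    [NormedAlgebra ℂ C] [StarModule ℂ C]
    (γ : G → C ≃⋆ₐ[ℂ] C) (hγmul : ∀ g h c, γ (g * h) c = γ g (γ h c))
    (hγcont : ∀ c, Continuous fun g => γ g c)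
    (ρ : G → Matrix (Fin d) (Fin d) ℂ)
    (hρU : ∀ g, ρ g ∈ unitary (Matrix (Fin d) (Fin d) ℂ))
    (hρ1 : ρ 1 = 1) (hρmul : ∀ g h, ρ (g * h) = ρ g * ρ h)
    (hρcont : Continuous ρ)
    (μ₀ : Matrix (Fin d) (Fin d) ℂ → ℂ → E)
    (hμ₀def : ∀ x l, μ₀ x l =
      (∑ j, ∑ k, x j k • (r j * star (r k))) + l • (1 - ∑ j, r j * star (r j)))
    (α : G → E ≃⋆ₐ[ℂ] E) (hαmul : ∀ g h a, α (g * h) a = α g (α h a))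
    (hαdef : ∀ g j, α g (r j) = μ₀ (ρ g) 1 * r j)
    (φ : E →⋆ₐ[ℂ] C)
    (hequiv : ∀ g x l, γ g (φ (μ₀ x l)) = φ (μ₀ (ρ g * x * star (ρ g)) l))
    (w : G → C)
    (hwdef : ∀ g, w g = star (φ (α g (r ⟨0, hd⟩))) * γ g (φ (r ⟨0, hd⟩)))
    (v : C) (hv : v ∈ unitary C)
    (hvw : ∀ g, v * star (γ g v) = w g) :
    (∃! ψ : E →⋆ₐ[ℂ] C, ∀ j, ψ (r j) = φ (r j) * v) ∧
      ∀ ψ : E →⋆ₐ[ℂ] C, (∀ j, ψ (r j) = φ (r j) * v) →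
        (∀ g a, ψ (α g a) = γ g (ψ a)) ∧ (∀ x l, ψ (μ₀ x l) = φ (μ₀ x l)) :=
  stmt14_general d hd r hiso horth huniv γ ρ hρU μ₀ hμ₀def α hαdef φ hequiv w hwdef v hv hvw
end

section
/- Let A be a unital C*-algebra, ζ ∈ S¹ with ζ ≠ 1, and suppose there is a unital representation π : O_∞ → L(ℓ²(ℤ₊)) with π(s_j)δ_l = δ_{2^{j-1}(2l-1)}. Then there is no unitary v ∈ O_∞ with v s₁ v* = ζ s₁; hence no inner automorphism β of O_∞ with β(s₁) = ζ s₁ can exist. -/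
lemma stmt16_aux_pow : ∀ n : ℕ, 0 < n → ∃ a l : ℕ, n = 2 ^ a * (2 * l + 1) := by
  intro n
  induction n using Nat.strong_induction_on with
  | _ n ih =>
    intro hn
    rcases Nat.even_or_odd n with ⟨m, hm⟩ | ⟨m, hm⟩
    · have hm0 : 0 < m := by omega
      obtain ⟨a, l, h⟩ := ih m (by omega) hm0
      exact ⟨a + 1, l, by rw [show n = 2 * m by omega, h]; ring⟩
    · exact ⟨0, m, by omega⟩

/-- Part of the proof of Proposition 4.15 of the paper.  Let `O` be (a copy of) `O_∞`,
generated by isometries `s 0, s 1, …` with mutually orthogonal range projections, and let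
`π : O_∞ → L(ℓ²(ℤ₊))` be the unital representation with `π(s_j)δ_l = δ_{2^{j-1}(2l-1)}`
(indices shifted so that the generator `s j` is the paper's `s_{j+1}` and the basis vector
`e l` is the paper's `δ_{l+1}`; then `f(j+1, l+1) = 2^j(2l+1)` corresponds to index
`2^j(2l+1) - 1`).  Let `ζ ∈ S¹`, `ζ ≠ 1`.  Then there is no unitary `v ∈ O_∞` with
`v s₁ v* = ζ s₁`; hence no inner automorphism `β` of `O_∞` satisfies `β(s₁) = ζ s₁`. -/
theorem stmt16 {O : Type*} [NormedRing O] [StarRing O] [CStarRing O] [CompleteSpace O]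
    [NormedAlgebra ℂ O] [StarModule ℂ O] [Nontrivial O]
    (s : ℕ → O)
    (hiso : ∀ j, star (s j) * s j = 1)
    (horth : ∀ j k, j ≠ k → (s j * star (s j)) * (s k * star (s k)) = 0)
    (hgen : (StarAlgebra.adjoin ℂ (Set.range s)).topologicalClosure = ⊤)
    (ζ : ℂ) (hζ : ‖ζ‖ = 1) (hζ1 : ζ ≠ 1)
    (e : ℕ → lp (fun _ : ℕ => ℂ) 2)
    (hedef : ∀ l, e l = lp.single 2 l (1 : ℂ))
    (π : O →⋆ₐ[ℂ] (lp (fun _ : ℕ => ℂ) 2 →L[ℂ] lp (fun _ : ℕ => ℂ) 2))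
    (hπ : ∀ j l, π (s j) (e l) = e (2 ^ j * (2 * l + 1) - 1)) :
    ¬ ∃ v : O, v ∈ unitary O ∧ v * s 0 * star v = ζ • s 0 := by
  rintro ⟨v, hv, hvs⟩
  have hv1 : star v * v = 1 := hv.1
  -- action of `π (s 0)` on basis vectors
  have hT0 : ∀ l, π (s 0) (e l) = e (2 * l) := by
    intro l
    have h := hπ 0 l
    simp only [pow_zero, one_mul, Nat.add_sub_cancel] at h
    exact h
  have h00 : π (s 0) (e 0) = e 0 := by
    have := hT0 0
    norm_num at this
    exact this
  -- `v * s 0 = ζ • (s 0 * v)`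
  have hvs' : v * s 0 = ζ • (s 0 * v) := by
    calc v * s 0 = v * s 0 * (star v * v) := by rw [hv1, mul_one]
      _ = (v * s 0 * star v) * v := by noncomm_ring
      _ = (ζ • s 0) * v := by rw [hvs]
      _ = ζ • (s 0 * v) := by rw [smul_mul_assoc]
  -- key eigenvector equation
  have key : π v (e 0) = ζ • π (s 0) (π v (e 0)) := by
    have h := congrArg (fun a => π a (e 0)) hvs'
    simp only [map_mul, map_smul, ContinuousLinearMap.mul_apply,
      ContinuousLinearMap.smul_apply] at h
    rw [h00] at h
    exact h
  -- orthogonality of ranges : `star (s 0) * s j = 0` for `j ≠ 0`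
  have horth0 : ∀ j, j ≠ 0 → star (s 0) * s j = 0 := by
    intro j hj
    have h := horth 0 j (fun h' => hj h'.symm)
    calc star (s 0) * s j
        = (star (s 0) * s 0) * (star (s 0) * s j) * (star (s j) * s j) := by
          rw [hiso 0, hiso j, one_mul, mul_one]
      _ = star (s 0) * ((s 0 * star (s 0)) * (s j * star (s j))) * s j := by
          simp only [mul_assoc]
      _ = 0 := by rw [h, mul_zero, zero_mul]
  -- action of `π (star (s 0))` on basis vectors
  have hSeven : ∀ l, π (star (s 0)) (e (2 * l)) = e l := by
    intro l
    have h : π (star (s 0)) (π (s 0) (e l)) = e l := by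
      rw [← ContinuousLinearMap.mul_apply, ← map_mul, hiso 0, map_one,
        ContinuousLinearMap.one_apply]
    rwa [hT0 l] at h
  have hSodd : ∀ m, π (star (s 0)) (e (2 * m + 1)) = 0 := by
    intro m
    obtain ⟨a, l, hal⟩ := stmt16_aux_pow (2 * m + 2) (by omega)
    have ha : a ≠ 0 := by
      intro h0
      subst h0
      simp only [pow_zero, one_mul] at hal
      omega
    have h1 : 2 * m + 1 = 2 ^ a * (2 * l + 1) - 1 := by rw [← hal]; omega
    rw [h1, ← hπ a l, ← ContinuousLinearMap.mul_apply, ← map_mul, horth0 a ha,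
      map_zero, ContinuousLinearMap.zero_apply]
  -- moving `π (s 0)` to the other side of the inner product
  have hadj : ∀ (k : ℕ) (y : lp (fun _ : ℕ => ℂ) 2),
      (inner ℂ (e k) (π (s 0) y) : ℂ) = inner ℂ (π (star (s 0)) (e k)) y := by
    intro k y
    rw [map_star, ContinuousLinearMap.star_eq_adjoint,
      ContinuousLinearMap.adjoint_inner_left]
  -- all coefficients of `π v (e 0)` vanish
  have hcoef : ∀ k : ℕ, (inner ℂ (e k) (π v (e 0)) : ℂ) = 0 := by
    intro k
    induction k using Nat.strong_induction_on with
    | _ k ih =>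
      have hstep : (inner ℂ (e k) (π v (e 0)) : ℂ)
          = ζ * inner ℂ (π (star (s 0)) (e k)) (π v (e 0)) := by
        conv_lhs => rw [key]
        rw [inner_smul_right, hadj]
      rcases Nat.even_or_odd k with ⟨m, hm⟩ | ⟨m, hm⟩
      · have hk2 : k = 2 * m := by omega
        rw [hk2, hSeven m] at hstep
        rw [hk2]
        by_cases hm0 : m = 0
        · subst hm0
          have hstep' : (inner ℂ (e 0) (π v (e 0)) : ℂ)
              = ζ * inner ℂ (e 0) (π v (e 0)) := by simpa using hstep
          have hz : (1 - ζ) * (inner ℂ (e 0) (π v (e 0)) : ℂ) = 0 := by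
            linear_combination hstep'
          have hgoal : (inner ℂ (e 0) (π v (e 0)) : ℂ) = 0 := by
            rcases mul_eq_zero.mp hz with h | h
            · exact absurd (sub_eq_zero.mp h).symm hζ1
            · exact h
          simpa using hgoal
        · rw [ih m (by omega), mul_zero] at hstep
          exact hstep
      · rw [hm, hSodd m, inner_zero_left, mul_zero] at hstep
        rw [hm]
        exact hstep
  -- hence `π v (e 0) = 0`
  have hx0 : π v (e 0) = 0 := by
    apply lp.ext
    funext k
    have h := hcoef k
    rw [hedef k, lp.inner_single_left] at h
    simpa using h
  -- but then `e 0 = 0`, contradiction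
  have he0 : e 0 = 0 := by
    have h : π (star v) (π v (e 0)) = e 0 := by
      rw [← ContinuousLinearMap.mul_apply, ← map_mul, hv1, map_one,
        ContinuousLinearMap.one_apply]
    rw [hx0, map_zero] at h
    exact h.symm
  have h1 : (1 : ℂ) = 0 := by
    have h2 := congrArg (fun f : lp (fun _ : ℕ => ℂ) 2 => f 0) he0
    simp only [hedef] at h2
    simpa [lp.single_apply_self] using h2
  exact one_ne_zero h1
end
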